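/- arXiv:1306.0217 — 7 statements merged into one kernel-verified Lean document; each statement's English description precedes it below -/
import Mathlib

section
/- Let A be an N×N block tridiagonal matrix with K×K blocks B_0,...,B_{L-1} on the diagonal, D_0,...,D_{L-2} on the superdiagonal, and C_0,...,C_{L-2} on the subdiagonal, where N = KL and each D_n is nonsingular. Define matrix polynomials by P_{-1}(x) = 0, P_0(x) = I_K, and P_{n+1}(x) = D_n^{-1}(x·P_n(x) − B_n·P_n(x) − C_{n-1}·P_{n-1}(x)) (with D_{L-1} = I_K). Then a nonzero vector v ∈ ℂ^N is an eigenvector of A with eigenvalue λ if and only if det P_L(λ) = 0 and v has the block form v = (P_0(λ)u, P_1(λ)u, ..., P_{L-1}(λ)u)^T for some nonzero u ∈ ℂ^K with P_L(λ)u = 0. -/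
open Matrix Finset

private lemma sum_fin_ite {L : ℕ} (c : ℕ) (g : Fin L → ℂ) :
    ∑ j : Fin L, (if (j : ℕ) = c then g j else 0) =
      if h : c < L then g ⟨c, h⟩ else 0 := by
  split_ifs with h
  · rw [Finset.sum_eq_single (⟨c, h⟩ : Fin L)]
    · simp
    · intro b _ hb
      simp only [ite_eq_right_iff]
      intro hbc; exact absurd (Fin.ext hbc) hb
    · simp
  · apply Finset.sum_eq_zero
    intro j _
    have : (j : ℕ) ≠ c := by have := j.isLt; omega
    simp [this]

/-- eigenvectors of a block tridiagonal matrix correspond exactly to zeros of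
the matrix polynomial `P L` together with null vectors of `P L λ`. -/
theorem blockTridiag_eigenvector_iff
    (K L : ℕ) (hK : 0 < K) (hL : 0 < L)
    (Bm Cm Dm : ℕ → Matrix (Fin K) (Fin K) ℂ)
    (hD : ∀ n, IsUnit (Dm n))
    (hDlast : Dm (L - 1) = 1)
    (A : Matrix (Fin L × Fin K) (Fin L × Fin K) ℂ)
    (hA : ∀ (i j : Fin L) (k l : Fin K),
      A (i, k) (j, l) =
        if (i : ℕ) = (j : ℕ) then Bm (i : ℕ) k l
        else if (j : ℕ) = (i : ℕ) + 1 then Dm (i : ℕ) k l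
        else if (i : ℕ) = (j : ℕ) + 1 then Cm (j : ℕ) k l
        else 0)
    (P : ℕ → ℂ → Matrix (Fin K) (Fin K) ℂ)
    (hP0 : ∀ x, P 0 x = 1)
    (hP1 : ∀ x, P 1 x = (Dm 0)⁻¹ * (x • (1 : Matrix (Fin K) (Fin K) ℂ) - Bm 0))
    (hPrec : ∀ n x, P (n + 2) x =
      (Dm (n + 1))⁻¹ * (x • P (n + 1) x - Bm (n + 1) * P (n + 1) x - Cm n * P n x))
    (lam : ℂ) (v : Fin L × Fin K → ℂ) (hv : v ≠ 0) :
    A.mulVec v = lam • v ↔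
      ((P L lam).det = 0 ∧ ∃ u : Fin K → ℂ, u ≠ 0 ∧ (P L lam).mulVec u = 0 ∧
        ∀ p : Fin L × Fin K, v p = (P (p.1 : ℕ) lam).mulVec u p.2) := by
  have hdet : ∀ n, IsUnit (Dm n).det := fun n => (Matrix.isUnit_iff_isUnit_det _).mp (hD n)
  -- cancellation
  have hDinj : ∀ n (x y : Fin K → ℂ),
      (Dm n).mulVec x = (Dm n).mulVec y → x = y := by
    intro n x y h
    have h2 := congrArg (fun z => (Dm n)⁻¹.mulVec z) h
    simpa [Matrix.mulVec_mulVec, Matrix.nonsing_inv_mul _ (hdet n),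
      Matrix.one_mulVec] using h2
  -- key recurrence for the matrix polynomials, multiplied through by `Dm n`
  have hDP : ∀ n, Dm n * P (n + 1) lam =
      lam • P n lam - Bm n * P n lam -
        (if n = 0 then 0 else Cm (n - 1) * P (n - 1) lam) := by
    intro n
    cases n with
    | zero =>
        simp [hP1, ← Matrix.mul_assoc, Matrix.mul_nonsing_inv _ (hdet 0), hP0]
    | succ m =>
        rw [hPrec m lam, ← Matrix.mul_assoc, Matrix.mul_nonsing_inv _ (hdet (m + 1))]
        simp
  -- block components of v, extended by zero
  set wn : ℕ → Fin K → ℂ := fun n l => if h : n < L then v (⟨n, h⟩, l) else 0 with hwn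
  have hwlt : ∀ (n : ℕ) (h : n < L) (l : Fin K), wn n l = v (⟨n, h⟩, l) := by
    intro n h l; simp [hwn, h]
  have hwL : wn L = 0 := by
    funext l; simp [hwn]
  -- row-by-row description of the eigenvalue equation
  have hrow : A.mulVec v = lam • v ↔ ∀ n, n < L →
      (Bm n).mulVec (wn n) + (Dm n).mulVec (wn (n + 1)) +
        (if n = 0 then 0 else (Cm (n - 1)).mulVec (wn (n - 1))) = lam • wn n := by
    constructor
    · intro h n hn
      funext k
      have hk := congrFun h (⟨n, hn⟩, k)
      have hmv : (A.mulVec v) (⟨n, hn⟩, k) =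
          (Bm n).mulVec (wn n) k + (Dm n).mulVec (wn (n + 1)) k +
            (if n = 0 then 0 else (Cm (n - 1)).mulVec (wn (n - 1)) k) := by
        have key : ∀ (j : Fin L) (l : Fin K),
            A (⟨n, hn⟩, k) (j, l) * v (j, l) =
              (if (j : ℕ) = n then Bm n k l * v (j, l) else 0)
              + (if (j : ℕ) = n + 1 then Dm n k l * v (j, l) else 0)
              + (if n = (j : ℕ) + 1 then Cm (j : ℕ) k l * v (j, l) else 0) := by
          intro j l
          rw [hA]
          simp only []
          split_ifs <;> first | ring1 | (exfalso; omega)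
        calc (A.mulVec v) (⟨n, hn⟩, k)
            = ∑ p : Fin L × Fin K, A (⟨n, hn⟩, k) p * v p := rfl
          _ = ∑ j : Fin L, ∑ l : Fin K, A (⟨n, hn⟩, k) (j, l) * v (j, l) :=
              Fintype.sum_prod_type _
          _ = ∑ j : Fin L,
              ((if (j : ℕ) = n then ∑ l, Bm n k l * v (j, l) else 0)
              + (if (j : ℕ) = n + 1 then ∑ l, Dm n k l * v (j, l) else 0)
              + (if n = (j : ℕ) + 1 then ∑ l, Cm (j : ℕ) k l * v (j, l) else 0)) := by
                refine Finset.sum_congr rfl fun j _ => ?_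
                rw [show (∑ l : Fin K, A _ (j, l) * v (j, l)) = _ from
                  Finset.sum_congr rfl fun l _ => key j l]
                split_ifs <;> simp [Finset.sum_add_distrib]
          _ = (Bm n).mulVec (wn n) k + (Dm n).mulVec (wn (n + 1)) k +
              (if n = 0 then 0 else (Cm (n - 1)).mulVec (wn (n - 1)) k) := by
                rw [Finset.sum_add_distrib, Finset.sum_add_distrib]
                congr 1
                · congr 1
                  · rw [sum_fin_ite n (fun j => ∑ l, Bm n k l * v (j, l)), dif_pos hn]
                    simp only [Matrix.mulVec, dotProduct]
                    refine Finset.sum_congr rfl fun l _ => ?_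
                    rw [hwlt n hn l]
                  · rw [sum_fin_ite (n + 1) (fun j => ∑ l, Dm n k l * v (j, l))]
                    by_cases h1 : n + 1 < L
                    · rw [dif_pos h1]
                      simp only [Matrix.mulVec, dotProduct]
                      refine Finset.sum_congr rfl fun l _ => ?_
                      rw [hwlt (n + 1) h1 l]
                    · rw [dif_neg h1]
                      have : wn (n + 1) = 0 := by funext l; simp [hwn, h1]
                      rw [this, Matrix.mulVec_zero]
                      simp
                · by_cases h0 : n = 0
                  · subst h0
                    simp only [if_pos rfl]
                    apply Finset.sum_eq_zero
                    intro j _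
                    simp
                  · rw [if_neg h0]
                    have hcond : ∀ j : Fin L, (n = (j : ℕ) + 1) = ((j : ℕ) = n - 1) := by
                      intro j; apply propext; constructor <;> intro hh <;> omega
                    have : ∑ j : Fin L,
                        (if n = (j : ℕ) + 1 then ∑ l, Cm (j : ℕ) k l * v (j, l) else 0)
                        = ∑ j : Fin L,
                        (if (j : ℕ) = n - 1 then ∑ l, Cm (n - 1) k l * v (j, l) else 0) := by
                      refine Finset.sum_congr rfl fun j _ => ?_
                      by_cases hc : n = (j : ℕ) + 1
                      · have hj : (j : ℕ) = n - 1 := by omega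
                        rw [if_pos hc, if_pos hj, hj]
                      · have hj : ¬ ((j : ℕ) = n - 1) := by omega
                        rw [if_neg hc, if_neg hj]
                    rw [this, sum_fin_ite (n - 1) (fun j => ∑ l, Cm (n - 1) k l * v (j, l))]
                    have hn1 : n - 1 < L := by omega
                    rw [dif_pos hn1]
                    simp only [Matrix.mulVec, dotProduct]
                    refine Finset.sum_congr rfl fun l _ => ?_
                    rw [hwlt (n - 1) hn1 l]
      simp only [Pi.add_apply]
      have hite : (if n = 0 then (0 : Fin K → ℂ) else (Cm (n - 1)).mulVec (wn (n - 1))) k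
          = (if n = 0 then 0 else (Cm (n - 1)).mulVec (wn (n - 1)) k) := by
        split_ifs <;> rfl
      rw [hite, ← hmv, hk]
      simp [hwlt n hn k]
    · intro h
      funext p
      obtain ⟨i, k⟩ := p
      have hi := h (i : ℕ) i.isLt
      have hk := congrFun hi k
      -- reuse the computation above in reverse
      have hmv : (A.mulVec v) (i, k) =
          (Bm (i : ℕ)).mulVec (wn (i : ℕ)) k + (Dm (i : ℕ)).mulVec (wn ((i : ℕ) + 1)) k +
            (if (i : ℕ) = 0 then 0 else (Cm ((i : ℕ) - 1)).mulVec (wn ((i : ℕ) - 1)) k) := by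
        have key : ∀ (j : Fin L) (l : Fin K),
            A (i, k) (j, l) * v (j, l) =
              (if (j : ℕ) = (i : ℕ) then Bm (i : ℕ) k l * v (j, l) else 0)
              + (if (j : ℕ) = (i : ℕ) + 1 then Dm (i : ℕ) k l * v (j, l) else 0)
              + (if (i : ℕ) = (j : ℕ) + 1 then Cm (j : ℕ) k l * v (j, l) else 0) := by
          intro j l
          rw [hA]
          split_ifs <;> first | ring1 | (exfalso; omega)
        calc (A.mulVec v) (i, k)
            = ∑ p : Fin L × Fin K, A (i, k) p * v p := rfl
          _ = ∑ j : Fin L, ∑ l : Fin K, A (i, k) (j, l) * v (j, l) :=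
              Fintype.sum_prod_type _
          _ = ∑ j : Fin L,
              ((if (j : ℕ) = (i : ℕ) then ∑ l, Bm (i : ℕ) k l * v (j, l) else 0)
              + (if (j : ℕ) = (i : ℕ) + 1 then ∑ l, Dm (i : ℕ) k l * v (j, l) else 0)
              + (if (i : ℕ) = (j : ℕ) + 1 then ∑ l, Cm (j : ℕ) k l * v (j, l) else 0)) := by
                refine Finset.sum_congr rfl fun j _ => ?_
                rw [show (∑ l : Fin K, A _ (j, l) * v (j, l)) = _ from
                  Finset.sum_congr rfl fun l _ => key j l]
                split_ifs <;> simp [Finset.sum_add_distrib]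
          _ = _ := by
                rw [Finset.sum_add_distrib, Finset.sum_add_distrib]
                congr 1
                · congr 1
                  · rw [sum_fin_ite (i : ℕ) (fun j => ∑ l, Bm (i : ℕ) k l * v (j, l)),
                      dif_pos i.isLt]
                    simp only [Matrix.mulVec, dotProduct]
                    refine Finset.sum_congr rfl fun l _ => ?_
                    rw [hwlt (i : ℕ) i.isLt l]
                  · rw [sum_fin_ite ((i : ℕ) + 1) (fun j => ∑ l, Dm (i : ℕ) k l * v (j, l))]
                    by_cases h1 : (i : ℕ) + 1 < L
                    · rw [dif_pos h1]
                      simp only [Matrix.mulVec, dotProduct]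
                      refine Finset.sum_congr rfl fun l _ => ?_
                      rw [hwlt ((i : ℕ) + 1) h1 l]
                    · rw [dif_neg h1]
                      have : wn ((i : ℕ) + 1) = 0 := by funext l; simp [hwn, h1]
                      rw [this, Matrix.mulVec_zero]
                      simp
                · by_cases h0 : (i : ℕ) = 0
                  · rw [h0]
                    simp only [if_pos rfl]
                    apply Finset.sum_eq_zero
                    intro j _
                    simp
                  · rw [if_neg h0]
                    have : ∑ j : Fin L,
                        (if (i : ℕ) = (j : ℕ) + 1 then ∑ l, Cm (j : ℕ) k l * v (j, l) else 0)
                        = ∑ j : Fin L,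
                        (if (j : ℕ) = (i : ℕ) - 1 then ∑ l, Cm ((i : ℕ) - 1) k l * v (j, l)
                          else 0) := by
                      refine Finset.sum_congr rfl fun j _ => ?_
                      by_cases hc : (i : ℕ) = (j : ℕ) + 1
                      · have hj : (j : ℕ) = (i : ℕ) - 1 := by omega
                        rw [if_pos hc, if_pos hj, hj]
                      · have hj : ¬ ((j : ℕ) = (i : ℕ) - 1) := by omega
                        rw [if_neg hc, if_neg hj]
                    rw [this, sum_fin_ite ((i : ℕ) - 1)
                      (fun j => ∑ l, Cm ((i : ℕ) - 1) k l * v (j, l))]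
                    have hn1 : (i : ℕ) - 1 < L := by have := i.isLt; omega
                    rw [dif_pos hn1]
                    simp only [Matrix.mulVec, dotProduct]
                    refine Finset.sum_congr rfl fun l _ => ?_
                    rw [hwlt ((i : ℕ) - 1) hn1 l]
      rw [hmv]
      have hvik : v (i, k) = wn (i : ℕ) k := (hwlt (i : ℕ) i.isLt k).symm
      have : (⟨(i : ℕ), i.isLt⟩ : Fin L) = i := rfl
      simp only [Pi.smul_apply, smul_eq_mul]
      rw [hvik]
      have hk' := hk
      simp only [Pi.add_apply, Pi.smul_apply, smul_eq_mul] at hk'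
      convert hk' using 2
      split_ifs <;> simp
  rw [hrow]
  constructor
  · -- forward direction
    intro h
    set u : Fin K → ℂ := wn 0 with hu
    have hw : ∀ n, n ≤ L → wn n = (P n lam).mulVec u := by
      intro n
      induction n using Nat.strong_induction_on with
      | _ n ih =>
        intro hnL
        match n with
        | 0 => simp [hP0, Matrix.one_mulVec, hu]
        | (m + 1) =>
          have hm : m < L := by omega
          have hrm := h m hm
          have hwm : wn m = (P m lam).mulVec u := ih m (by omega) (by omega)
          have hCm : (if m = 0 then 0 else (Cm (m - 1)).mulVec (wn (m - 1))) =
              (if m = 0 then (0 : Matrix (Fin K) (Fin K) ℂ)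
                else Cm (m - 1) * P (m - 1) lam).mulVec u := by
            by_cases h0 : m = 0
            · simp [h0, Matrix.zero_mulVec]
            · rw [if_neg h0, if_neg h0]
              have hwm1 : wn (m - 1) = (P (m - 1) lam).mulVec u :=
                ih (m - 1) (by omega) (by omega)
              rw [hwm1, Matrix.mulVec_mulVec]
          have hstep : (Dm m).mulVec (wn (m + 1)) =
              (Dm m).mulVec ((P (m + 1) lam).mulVec u) := by
            have : (Dm m).mulVec (wn (m + 1)) =
                lam • wn m - (Bm m).mulVec (wn m) -
                  (if m = 0 then 0 else (Cm (m - 1)).mulVec (wn (m - 1))) := by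
              rw [← hrm]; abel
            rw [this, hwm, hCm, Matrix.mulVec_mulVec, Matrix.mulVec_mulVec, hDP m]
            rw [Matrix.sub_mulVec, Matrix.sub_mulVec, Matrix.smul_mulVec]
          exact hDinj m _ _ hstep
    have hPL : (P L lam).mulVec u = 0 := by
      rw [← hw L le_rfl, hwL]
    have hu0 : u ≠ 0 := by
      intro hu0
      apply hv
      funext p
      obtain ⟨i, k⟩ := p
      have := hw (i : ℕ) (le_of_lt i.isLt)
      have h2 := congrFun this k
      rw [hwlt (i : ℕ) i.isLt k] at h2
      simp only [Pi.zero_apply]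
      rw [show ((⟨(i : ℕ), i.isLt⟩ : Fin L), k) = (i, k) from rfl] at h2
      rw [h2, hu0, Matrix.mulVec_zero]
      rfl
    refine ⟨Matrix.exists_mulVec_eq_zero_iff.mp ⟨u, hu0, hPL⟩, u, hu0, hPL, ?_⟩
    intro p
    obtain ⟨i, k⟩ := p
    have := congrFun (hw (i : ℕ) (le_of_lt i.isLt)) k
    rw [hwlt (i : ℕ) i.isLt k] at this
    exact this
  · -- backward direction
    rintro ⟨-, u, hu0, hPL, hvp⟩
    have hw : ∀ n, n ≤ L → wn n = (P n lam).mulVec u := by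
      intro n hn
      rcases lt_or_eq_of_le hn with hlt | heq
      · funext l
        rw [hwlt n hlt l]
        exact hvp (⟨n, hlt⟩, l)
      · subst heq
        rw [hwL, hPL]
    intro n hn
    rw [hw n (le_of_lt hn), hw (n + 1) (by omega)]
    simp only [Matrix.mulVec_mulVec]
    rw [hDP n, Matrix.sub_mulVec, Matrix.sub_mulVec, Matrix.smul_mulVec]
    have hC : (if n = 0 then 0 else (Cm (n - 1)).mulVec (wn (n - 1))) =
        (if n = 0 then (0 : Matrix (Fin K) (Fin K) ℂ)
          else Cm (n - 1) * P (n - 1) lam).mulVec u := by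
      by_cases h0 : n = 0
      · simp [h0, Matrix.zero_mulVec]
      · rw [if_neg h0, if_neg h0, hw (n - 1) (by omega), Matrix.mulVec_mulVec]
    rw [hC]
    abel
end

section
/- If λ is an eigenvalue of the block tridiagonal matrix A (with invertible superdiagonal blocks D_n), then the geometric eigenspace ker(A − λI_N) is isomorphic, via the map u ↦ (P_0(λ)u, ..., P_{L-1}(λ)u)^T, to the null space of the K×K scalar matrix P_L(λ). In particular dim ker(A − λI_N) = dim ker P_L(λ). -/
open Matrix

private lemma finrank_ker_eq_of_bij {m n : Type*} [Fintype m] [Fintype n]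
    [DecidableEq m] [DecidableEq n]
    (M : Matrix m m ℂ) (N : Matrix n n ℂ) (f : (n → ℂ) →ₗ[ℂ] (m → ℂ))
    (h1 : ∀ u, N.mulVec u = 0 → M.mulVec (f u) = 0)
    (h2 : ∀ u, N.mulVec u = 0 → f u = 0 → u = 0)
    (h3 : ∀ v, M.mulVec v = 0 → ∃ u, N.mulVec u = 0 ∧ v = f u) :
    Module.finrank ℂ (LinearMap.ker M.mulVecLin) =
      Module.finrank ℂ (LinearMap.ker N.mulVecLin) := by
  have hmem : ∀ u : LinearMap.ker N.mulVecLin,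
      (f u.1) ∈ LinearMap.ker M.mulVecLin := by
    intro u
    have := u.2
    simp only [LinearMap.mem_ker, Matrix.mulVecLin_apply] at this ⊢
    exact h1 _ this
  let g : LinearMap.ker N.mulVecLin →ₗ[ℂ] LinearMap.ker M.mulVecLin :=
    LinearMap.codRestrict _ (f.comp (LinearMap.ker N.mulVecLin).subtype) hmem
  have hbij : Function.Bijective g := by
    constructor
    · intro a b hab
      have hfab : f a.1 = f b.1 := congrArg Subtype.val hab
      have ha := a.2
      have hb := b.2
      simp only [LinearMap.mem_ker, Matrix.mulVecLin_apply] at ha hb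
      have : a.1 - b.1 = 0 := by
        apply h2
        · rw [Matrix.mulVec_sub, ha, hb, sub_zero]
        · rw [map_sub, hfab, sub_self]
      exact Subtype.ext (sub_eq_zero.mp this)
    · intro v
      have hv := v.2
      simp only [LinearMap.mem_ker, Matrix.mulVecLin_apply] at hv
      obtain ⟨u, hu, huv⟩ := h3 v.1 hv
      exact ⟨⟨u, by simp [LinearMap.mem_ker, Matrix.mulVecLin_apply, hu]⟩,
        Subtype.ext huv.symm⟩
  exact (LinearEquiv.ofBijective g hbij).finrank_eq.symm

/-- for an eigenvalue `λ` of the block tridiagonal matrix `A`, the map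
`u ↦ (P₀(λ)u, …, P_{L-1}(λ)u)` is a bijection from `ker (P_L λ)` onto `ker (A − λI)`;
in particular the two kernels have the same dimension. -/
theorem blockTridiag_eigenspace_iso
    (K L : ℕ) (hK : 0 < K) (hL : 0 < L)
    (Bm Cm Dm : ℕ → Matrix (Fin K) (Fin K) ℂ)
    (hD : ∀ n, IsUnit (Dm n))
    (hDlast : Dm (L - 1) = 1)
    (A : Matrix (Fin L × Fin K) (Fin L × Fin K) ℂ)
    (hA : ∀ (i j : Fin L) (k l : Fin K),
      A (i, k) (j, l) =
        if (i : ℕ) = (j : ℕ) then Bm (i : ℕ) k l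
        else if (j : ℕ) = (i : ℕ) + 1 then Dm (i : ℕ) k l
        else if (i : ℕ) = (j : ℕ) + 1 then Cm (j : ℕ) k l
        else 0)
    (P : ℕ → ℂ → Matrix (Fin K) (Fin K) ℂ)
    (hP0 : ∀ x, P 0 x = 1)
    (hP1 : ∀ x, P 1 x = (Dm 0)⁻¹ * (x • (1 : Matrix (Fin K) (Fin K) ℂ) - Bm 0))
    (hPrec : ∀ n x, P (n + 2) x =
      (Dm (n + 1))⁻¹ * (x • P (n + 1) x - Bm (n + 1) * P (n + 1) x - Cm n * P n x))
    (lam : ℂ)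
    (hEig : ∃ v : Fin L × Fin K → ℂ, v ≠ 0 ∧ A.mulVec v = lam • v)
    (Φ : (Fin K → ℂ) → (Fin L × Fin K → ℂ))
    (hΦ : ∀ (u : Fin K → ℂ) (p : Fin L × Fin K), Φ u p = (P (p.1 : ℕ) lam).mulVec u p.2) :
    (∀ u : Fin K → ℂ, (P L lam).mulVec u = 0 →
        (A.mulVec (Φ u) = lam • Φ u ∧ (Φ u = 0 → u = 0))) ∧
    (∀ v : Fin L × Fin K → ℂ, A.mulVec v = lam • v →
        ∃ u : Fin K → ℂ, (P L lam).mulVec u = 0 ∧ v = Φ u) ∧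
    Module.finrank ℂ (LinearMap.ker (Matrix.mulVecLin (A - lam • 1))) =
      Module.finrank ℂ (LinearMap.ker (Matrix.mulVecLin (P L lam))) := by
  set blk : (Fin L × Fin K → ℂ) → ℕ → (Fin K → ℂ) :=
    fun v m k => if h : m < L then v (⟨m, h⟩, k) else 0 with hblk
  -- the row computation
  have row : ∀ (v : Fin L × Fin K → ℂ) (n : ℕ) (hn : n < L) (k : Fin K),
      A.mulVec v (⟨n, hn⟩, k) =
        (if n = 0 then 0 else (Cm (n-1)).mulVec (blk v (n-1)) k)
        + (Bm n).mulVec (blk v n) k + (Dm n).mulVec (blk v (n+1)) k := by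
    intro v n hn k
    have hexp : A.mulVec v (⟨n, hn⟩, k) = ∑ p : Fin L × Fin K, A (⟨n, hn⟩, k) p * v p := rfl
    rw [hexp, Fintype.sum_prod_type]
    have step : ∀ j : Fin L, ∑ l : Fin K, A (⟨n, hn⟩, k) (j, l) * v (j, l) =
        (if (j : ℕ) = n then ∑ l, Bm n k l * v (j, l) else 0)
        + (if (j : ℕ) = n + 1 then ∑ l, Dm n k l * v (j, l) else 0)
        + (if (j : ℕ) + 1 = n then ∑ l, Cm (n-1) k l * v (j, l) else 0) := by
      intro j
      have hAe : ∀ l : Fin K, A (⟨n, hn⟩, k) (j, l) =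
          if n = (j : ℕ) then Bm n k l
          else if (j : ℕ) = n + 1 then Dm n k l
          else if n = (j : ℕ) + 1 then Cm (j : ℕ) k l
          else 0 := fun l => hA ⟨n, hn⟩ j k l
      rw [Finset.sum_congr rfl fun l _ => by rw [hAe l]]
      by_cases h1 : n = (j : ℕ)
      · rw [if_pos h1.symm, if_neg (by omega), if_neg (by omega), add_zero, add_zero]
        exact Finset.sum_congr rfl fun l _ => by rw [if_pos h1]
      · by_cases h2 : (j : ℕ) = n + 1
        · rw [if_neg (show ¬(j : ℕ) = n from fun h => h1 h.symm), if_pos h2,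
            if_neg (by omega), zero_add, add_zero]
          exact Finset.sum_congr rfl fun l _ => by rw [if_neg h1, if_pos h2]
        · by_cases h3 : n = (j : ℕ) + 1
          · rw [if_neg (show ¬(j : ℕ) = n from fun h => h1 h.symm), if_neg h2,
              if_pos h3.symm, zero_add, zero_add]
            have hj : (j : ℕ) = n - 1 := by omega
            refine Finset.sum_congr rfl fun l _ => ?_
            rw [if_neg h1, if_neg h2, if_pos h3, hj]
          · rw [if_neg (show ¬(j : ℕ) = n from fun h => h1 h.symm), if_neg h2,
              if_neg (show ¬(j : ℕ) + 1 = n from fun h => h3 h.symm),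
              add_zero, add_zero]
            rw [Finset.sum_eq_zero]
            intro l _
            rw [if_neg h1, if_neg h2, if_neg h3, zero_mul]
    rw [Finset.sum_congr rfl (fun j _ => step j), Finset.sum_add_distrib,
      Finset.sum_add_distrib]
    have hB : (∑ j : Fin L, if (j : ℕ) = n then ∑ l, Bm n k l * v (j, l) else 0)
        = (Bm n).mulVec (blk v n) k := by
      rw [Finset.sum_eq_single ⟨n, hn⟩]
      · rw [if_pos rfl]
        refine Finset.sum_congr rfl fun l _ => ?_
        simp only [hblk]
        rw [dif_pos hn]
      · intro j _ hj
        exact if_neg (fun hc => hj (Fin.ext hc))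
      · intro h; exact absurd (Finset.mem_univ _) h
    have hDt : (∑ j : Fin L, if (j : ℕ) = n + 1 then ∑ l, Dm n k l * v (j, l) else 0)
        = (Dm n).mulVec (blk v (n+1)) k := by
      by_cases hL1 : n + 1 < L
      · rw [Finset.sum_eq_single ⟨n + 1, hL1⟩]
        · rw [if_pos rfl]
          refine Finset.sum_congr rfl fun l _ => ?_
          simp only [hblk]
          rw [dif_pos hL1]
        · intro j _ hj
          exact if_neg (fun hc => hj (Fin.ext hc))
        · intro h; exact absurd (Finset.mem_univ _) h
      · rw [Finset.sum_eq_zero]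
        · simp only [Matrix.mulVec, dotProduct, hblk]
          rw [Finset.sum_eq_zero]
          intro l _
          rw [dif_neg hL1, mul_zero]
        · intro j _
          refine if_neg fun hc => ?_
          exact absurd j.2 (by omega)
    have hC : (∑ j : Fin L, if (j : ℕ) + 1 = n then ∑ l, Cm (n-1) k l * v (j, l) else 0)
        = if n = 0 then 0 else (Cm (n-1)).mulVec (blk v (n-1)) k := by
      by_cases h0 : n = 0
      · rw [if_pos h0, Finset.sum_eq_zero]
        intro j _
        exact if_neg (by omega)
      · rw [if_neg h0]
        have hn1 : n - 1 < L := by omega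
        rw [Finset.sum_eq_single ⟨n - 1, hn1⟩]
        · rw [if_pos (by simp only [Fin.val_mk]; omega)]
          refine Finset.sum_congr rfl fun l _ => ?_
          simp only [hblk]
          rw [dif_pos hn1]
        · intro j _ hj
          refine if_neg (fun hc => hj (Fin.ext ?_))
          simp only [Fin.val_mk]
          omega
        · intro h; exact absurd (Finset.mem_univ _) h
    rw [hB, hDt, hC]
    ring
  have hDdet : ∀ n, IsUnit (Dm n).det := fun n => (Matrix.isUnit_iff_isUnit_det _).mp (hD n)
  have hDcancel : ∀ (n : ℕ) (x y : Fin K → ℂ),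
      (Dm n).mulVec x = (Dm n).mulVec y → x = y := by
    intro n x y h
    have h2 := congrArg (fun w => (Dm n)⁻¹.mulVec w) h
    simpa [Matrix.mulVec_mulVec, Matrix.nonsing_inv_mul _ (hDdet n),
      Matrix.one_mulVec] using h2
  -- the key recurrence as a matrix identity
  have key : ∀ n : ℕ, Dm n * P (n+1) lam =
      lam • P n lam - Bm n * P n lam
        - (if n = 0 then 0 else Cm (n-1) * P (n-1) lam) := by
    intro n
    cases n with
    | zero =>
      rw [hP1, ← mul_assoc, Matrix.mul_nonsing_inv _ (hDdet 0), one_mul,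
        if_pos rfl, hP0, mul_one, sub_zero]
    | succ n =>
      rw [hPrec n lam, ← mul_assoc, Matrix.mul_nonsing_inv _ (hDdet (n+1)), one_mul,
        if_neg (Nat.succ_ne_zero n)]
      simp only [Nat.add_sub_cancel]
  -- the key recurrence applied to a vector, pointwise
  have keyv : ∀ (n : ℕ) (u : Fin K → ℂ) (k : Fin K),
      (Dm n).mulVec ((P (n+1) lam).mulVec u) k =
        lam * (P n lam).mulVec u k - (Bm n).mulVec ((P n lam).mulVec u) k
          - (if n = 0 then 0 else (Cm (n-1)).mulVec ((P (n-1) lam).mulVec u) k) := by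
    intro n u k
    have h1 := congrFun (congrArg (fun M => M.mulVec u) (key n)) k
    simp only [Matrix.sub_mulVec, Matrix.smul_mulVec, Matrix.mulVec_mulVec,
      Pi.sub_apply, Pi.smul_apply, smul_eq_mul] at h1 ⊢
    by_cases h0 : n = 0
    · rw [if_pos h0] at h1 ⊢
      simpa [Matrix.zero_mulVec] using h1
    · rw [if_neg h0] at h1 ⊢
      exact h1
  -- forward direction
  have fwd : ∀ u : Fin K → ℂ, (P L lam).mulVec u = 0 → A.mulVec (Φ u) = lam • Φ u := by
    intro u hu
    have hblkΦ : ∀ m, m ≤ L → blk (Φ u) m = (P m lam).mulVec u := by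
      intro m hm
      funext k
      simp only [hblk]
      by_cases h : m < L
      · rw [dif_pos h, hΦ]
      · have hmL : m = L := by omega
        rw [dif_neg h, hmL, hu]
        rfl
    funext p
    obtain ⟨i, k⟩ := p
    obtain ⟨n, hn⟩ := i
    rw [row (Φ u) n hn k, hblkΦ n (le_of_lt hn), hblkΦ (n+1) hn]
    have hrhs : (lam • Φ u) (⟨n, hn⟩, k) = lam * (P n lam).mulVec u k := by
      rw [Pi.smul_apply, smul_eq_mul, hΦ]
    rw [hrhs]
    have hkv := keyv n u k
    by_cases h0 : n = 0
    · rw [if_pos h0] at hkv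
      rw [if_pos h0]
      linear_combination hkv
    · rw [if_neg h0] at hkv
      rw [if_neg h0, hblkΦ (n-1) (by omega)]
      linear_combination hkv
  -- injectivity
  have inj : ∀ u : Fin K → ℂ, Φ u = 0 → u = 0 := by
    intro u h
    funext k
    have h1 := congrFun h (⟨0, hL⟩, k)
    rw [hΦ] at h1
    simpa [hP0, Matrix.one_mulVec] using h1
  -- backward direction
  have bwd : ∀ v : Fin L × Fin K → ℂ, A.mulVec v = lam • v →
      ∃ u : Fin K → ℂ, (P L lam).mulVec u = 0 ∧ v = Φ u := by
    intro v hv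
    refine ⟨blk v 0, ?_, ?_⟩ <;>
      [skip; skip]
    all_goals
      have claim : ∀ m : ℕ, m ≤ L → blk v m = (P m lam).mulVec (blk v 0) := by
        intro m
        induction m using Nat.strong_induction_on with
        | _ m IH =>
          intro hm
          cases m with
          | zero => rw [hP0, Matrix.one_mulVec]
          | succ m =>
            have hmL : m < L := by omega
            apply hDcancel m
            funext k
            have hr := row v m hmL k
            have heq : A.mulVec v (⟨m, hmL⟩, k) = lam * blk v m k := by
              rw [hv, Pi.smul_apply, smul_eq_mul]
              congr 1
              simp only [hblk]
              rw [dif_pos hmL]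
            rw [heq] at hr
            have hkv := keyv m (blk v 0) k
            rw [← IH m (by omega) (by omega)] at hkv
            by_cases h0 : m = 0
            · rw [if_pos h0] at hr hkv
              linear_combination -hr - hkv
            · rw [if_neg h0] at hr hkv
              rw [← IH (m-1) (by omega) (by omega)] at hkv
              linear_combination -hr - hkv
    · -- P L u = 0
      have hL0 : blk v L = 0 := by
        funext k
        simp only [hblk]
        rw [dif_neg (lt_irrefl L)]
        rfl
      rw [← claim L le_rfl, hL0]
    · -- v = Φ u
      funext p
      obtain ⟨i, k⟩ := p
      obtain ⟨n, hn⟩ := i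
      rw [hΦ]
      have := congrFun (claim n (le_of_lt hn)) k
      simp only [hblk] at this
      rw [dif_pos hn] at this
      exact this
  refine ⟨fun u hu => ⟨fwd u hu, inj u⟩, bwd, ?_⟩
  -- dimension equality
  let ΦL : (Fin K → ℂ) →ₗ[ℂ] (Fin L × Fin K → ℂ) :=
    { toFun := Φ
      map_add' := by
        intro u w
        funext p
        simp only [hΦ, Matrix.mulVec_add, Pi.add_apply]
      map_smul' := by
        intro c u
        funext p
        simp only [hΦ, Matrix.mulVec_smul, Pi.smul_apply, RingHom.id_apply] }
  have hker : ∀ v : Fin L × Fin K → ℂ,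
      (A - lam • 1).mulVec v = 0 ↔ A.mulVec v = lam • v := by
    intro v
    rw [Matrix.sub_mulVec, Matrix.smul_mulVec, Matrix.one_mulVec, sub_eq_zero]
  refine finrank_ker_eq_of_bij (A - lam • 1) (P L lam) ΦL ?_ ?_ ?_
  · intro u hu
    rw [hker]
    exact fwd u hu
  · intro u _ h
    exact inj u h
  · intro v hv
    exact bwd v ((hker v).mp hv)
end

section
/- If the block tridiagonal matrix A (with invertible superdiagonal blocks) is diagonalizable, then its characteristic polynomial equals det P_L(x) up to a nonzero constant factor: p_A(x) = (1/c)·det P_L(x), where c = det(D_0 ⋯ D_{L-1})^{-1}. In particular, every eigenvalue λ of A has algebraic multiplicity equal to its multiplicity as a root of det P_L(x). -/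
/-!
Write `T` for the characteristic matrix `X - A`, a block tridiagonal matrix over `ℂ[X]` with
blocks `X - Bₙ`, `-Dₙ`, `-Cₙ`. The recurrence says exactly that the block column
`(P₀, …, P_{L-1})` is annihilated by every block row of `T` except the last one, which sends it
to `D_{L-1} P_L`. Adding to the first block column of `T` the combination of the other block
columns with coefficients `P₁, …, P_{L-1}` (a unipotent column operation) therefore leaves a
matrix whose first block column is `(0, …, 0, D_{L-1} P_L)`. Rotating the block columns by one
step makes it block lower triangular with diagonal blocks `-D₀, …, -D_{L-2}, D_{L-1} P_L`, and
the signs of the rotation and of the `-Dₙ` cancel. This is an identity of polynomials, so the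
multiplicities of roots agree as well.
-/

open Polynomial

namespace Matrix

open Equiv Finset

section BlockTriangular

variable {R : Type*} [CommRing R] {m : Type*} [Fintype m] [DecidableEq m]
  {ι : Type*} [Fintype ι] [DecidableEq ι]

theorem det_toSquareBlock_fst (M : Matrix (ι × m) (ι × m) R) (i : ι) :
    (M.toSquareBlock Prod.fst i).det = ((comp ι ι m m R).symm M i i).det := by
  let e : { x : ι × m // x.1 = i } ≃ m :=
    { toFun := fun x => x.1.2
      invFun := fun k => ⟨(i, k), rfl⟩
      left_inv := by rintro ⟨⟨_, _⟩, rfl⟩; rfl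
      right_inv := fun _ => rfl }
  rw [← det_submatrix_equiv_self e]
  congr 1
  ext ⟨⟨i₁, k⟩, hk⟩ ⟨⟨i₂, l⟩, hl⟩
  dsimp only at hk hl
  subst hk hl
  rfl

variable [LinearOrder ι]

theorem det_comp_of_isLowerTriangular (M : Matrix ι ι (Matrix m m R))
    (h : M.IsLowerTriangular) : (comp ι ι m m R M).det = ∏ i, (M i i).det := by
  have hM : (comp ι ι m m R M)ᵀ.BlockTriangular Prod.fst := fun x y hxy => by
    simp [h hxy]
  rw [← det_transpose, hM.det_fintype]
  refine prod_congr rfl fun i _ => ?_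
  rw [det_toSquareBlock_fst, ← det_transpose]
  rfl

theorem det_comp_of_isLowerTriangular_submatrix (σ : Perm ι) (M : Matrix ι ι (Matrix m m R))
    (h : (M.submatrix id σ).IsLowerTriangular) :
    (comp ι ι m m R M).det =
      ((Perm.sign σ : ℤ) : R) ^ Fintype.card m * ∏ i, (M i (σ i)).det := by
  have hperm := det_permute' (prodCongrLeft fun _ : m => σ) (comp ι ι m m R M)
  have hsub : (comp ι ι m m R M).submatrix id (prodCongrLeft fun _ : m => σ) =
      comp ι ι m m R (M.submatrix id σ) := rfl
  rw [hsub, det_comp_of_isLowerTriangular _ h, Perm.sign_prodCongrLeft, prod_const,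
    card_univ] at hperm
  set s : R := (((Perm.sign σ ^ Fintype.card m : ℤˣ) : ℤ) : R)
  have hs : s * s = 1 := by
    rw [← Int.cast_mul, ← Units.val_mul, Int.units_mul_self, Units.val_one, Int.cast_one]
  calc (comp ι ι m m R M).det = s * s * (comp ι ι m m R M).det := by rw [hs, one_mul]
    _ = s * ∏ i, (M.submatrix id σ i i).det := by rw [hperm, mul_assoc]
    _ = _ := by simp [s]

end BlockTriangular

section BlockTridiagonal

variable {R : Type*} {m : Type*}

def tridiagBlock [Zero R] (a b c : ℕ → Matrix m m R) (i j : ℕ) : Matrix m m R :=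
  if i = j then a i else if j = i + 1 then b i else if i = j + 1 then c j else 0

def blockTridiagonal [Zero R] (L : ℕ) (a b c : ℕ → Matrix m m R) :
    Matrix (Fin L × m) (Fin L × m) R :=
  comp (Fin L) (Fin L) m m R (of fun i j => tridiagBlock a b c i j)

theorem tridiagBlock_eq_zero [Zero R] (a b c : ℕ → Matrix m m R) {i j : ℕ}
    (h : i + 1 < j ∨ j + 1 < i) : tridiagBlock a b c i j = 0 := by
  rw [tridiagBlock, if_neg (by omega), if_neg (by omega), if_neg (by omega)]

variable [CommRing R] [Fintype m] [DecidableEq m]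

/-- Row `i` of the infinite block tridiagonal matrix only meets the blocks `t ≤ i + 1`. -/
def IsBlockTridiagonalSolution (a b c p : ℕ → Matrix m m R) : Prop :=
  ∀ i, ∑ t ∈ range (i + 2), tridiagBlock a b c i t * p t = 0

theorem isBlockTridiagonalSolution_of_recurrence {a b c p : ℕ → Matrix m m R} (hp0 : p 0 = 1)
    (h0 : a 0 + b 0 * p 1 = 0)
    (hrec : ∀ i, c i * p i + a (i + 1) * p (i + 1) + b (i + 1) * p (i + 2) = 0) :
    IsBlockTridiagonalSolution a b c p := by
  rintro (_ | j)
  · simp [sum_range_succ, tridiagBlock, hp0, h0]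
  · have hlow : ∑ t ∈ range j, tridiagBlock a b c (j + 1) t * p t = 0 :=
      sum_eq_zero fun t ht => by
        rw [tridiagBlock_eq_zero a b c (Or.inr (by simp at ht; omega)), zero_mul]
    rw [sum_range_succ, sum_range_succ, sum_range_succ, hlow, zero_add, ← hrec j]
    simp [tridiagBlock, show j ≠ j + 1 + 1 by omega]

namespace IsBlockTridiagonalSolution

variable {a b c p : ℕ → Matrix m m R}

theorem sum_range_eq_zero (hp : IsBlockTridiagonalSolution a b c p) {i n : ℕ} (h : i < n) :
    ∑ t ∈ range (n + 1), tridiagBlock a b c i t * p t = 0 := by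
  rw [← sum_subset (range_subset_range.mpr (by omega : i + 2 ≤ n + 1)) fun t _ ht => ?_]
  · exact hp i
  · rw [tridiagBlock_eq_zero a b c (Or.inl (by simp at ht; omega)), zero_mul]

theorem sum_range_self (hp : IsBlockTridiagonalSolution a b c p) (n : ℕ) :
    ∑ t ∈ range (n + 1), tridiagBlock a b c n t * p t = -(b n * p (n + 1)) := by
  have h := hp n
  rw [sum_range_succ] at h
  simpa [tridiagBlock] using eq_neg_of_add_eq_zero_left h

end IsBlockTridiagonalSolution

theorem det_blockTridiagonal {a b c p : ℕ → Matrix m m R} (hp0 : p 0 = 1)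
    (hp : IsBlockTridiagonalSolution a b c p) (n : ℕ) :
    (blockTridiagonal (n + 1) a b c).det =
      (∏ i ∈ range (n + 1), (-b i).det) * (p (n + 1)).det := by
  set T : Matrix (Fin (n + 1)) (Fin (n + 1)) (Matrix m m R) :=
    of fun i j => tridiagBlock a b c i j
  set W : Matrix (Fin (n + 1)) (Fin (n + 1)) (Matrix m m R) :=
    of fun i j => if j = 0 then p i else if i = j then 1 else 0
  have hW : (comp _ _ m m R W).det = 1 := by
    rw [det_comp_of_isLowerTriangular W fun i j (hij : i < j) => by
      simp [W, Fin.ne_zero_of_lt hij, hij.ne]]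
    refine prod_eq_one fun i _ => ?_
    by_cases hi : i = 0 <;> simp [W, hi, hp0]
  have hTW : ∀ i j, (T * W) i j =
      if j = 0 then ∑ t ∈ range (n + 1), tridiagBlock a b c i t * p t
      else tridiagBlock a b c i j := by
    intro i j
    by_cases hj : j = 0
    · simp [T, W, mul_apply, hj, Fin.sum_univ_eq_sum_range (fun t => tridiagBlock a b c i t * p t)]
    · simp [T, W, mul_apply, hj]
  have hlower : ((T * W).submatrix id (finRotate (n + 1))).IsLowerTriangular := by
    intro i j (hij : i < j)
    by_cases hj : j = Fin.last n
    · subst hj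
      rw [submatrix_apply, id, finRotate_last, hTW, if_pos rfl]
      exact hp.sum_range_eq_zero hij
    · have hrot := coe_finRotate_of_ne_last hj
      rw [submatrix_apply, id, hTW, if_neg fun h => by simp [h] at hrot, hrot]
      exact tridiagBlock_eq_zero a b c (Or.inl (by omega))
  have hdiag : ∀ i : Fin n, (T * W) i.castSucc (finRotate (n + 1) i.castSucc) = b i := by
    intro i
    have hrot := coe_finRotate_of_ne_last (Fin.castSucc_lt_last i).ne
    rw [hTW, if_neg fun h => by simp [h] at hrot, hrot]
    simp [tridiagBlock]
  calc (blockTridiagonal (n + 1) a b c).det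
      = (comp _ _ m m R T).det * (comp _ _ m m R W).det := by rw [hW, mul_one]; rfl
    _ = (comp _ _ m m R (T * W)).det := by
      rw [← det_mul, ← compRingEquiv_apply, ← compRingEquiv_apply, ← compRingEquiv_apply,
        map_mul]
    _ = _ := by
      rw [det_comp_of_isLowerTriangular_submatrix _ _ hlower, Fin.prod_univ_castSucc,
        finRotate_last, hTW, if_pos rfl, Fin.val_last, hp.sum_range_self]
      simp only [hdiag, sign_finRotate, det_neg, det_mul, prod_range_succ, prod_mul_distrib,
        prod_const, card_range, Fin.prod_univ_eq_prod_range (fun i => (b i).det)]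
      push_cast
      ring

theorem charmatrix_blockTridiagonal (L : ℕ) (a b c : ℕ → Matrix m m R) :
    charmatrix (blockTridiagonal L a b c) =
      blockTridiagonal L (fun i => (X : R[X]) • 1 - (a i).map C) (fun i => -(b i).map C)
        (fun i => -(c i).map C) := by
  ext ⟨i, k⟩ ⟨j, l⟩
  by_cases hij : i = j
  · subst hij
    by_cases hkl : k = l <;> simp [blockTridiagonal, tridiagBlock, hkl]
  · have hne : (i : ℕ) ≠ j := Fin.val_ne_of_ne hij
    simp only [charmatrix_apply, blockTridiagonal, tridiagBlock, comp_apply, of_apply,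
      diagonal_apply_ne _ (fun h : (i, k) = (j, l) => hij (congrArg Prod.fst h)), if_neg hne]
    split_ifs <;> simp

theorem map_mul_eq_of_eq_map_inv_mul {S : Type*} [CommRing S] (f : R →+* S) {D : Matrix m m R}
    (hD : IsUnit D) {Q Y : Matrix m m S} (h : Q = D⁻¹.map f * Y) : D.map f * Q = Y := by
  rw [h, ← Matrix.mul_assoc, ← Matrix.map_mul,
    mul_nonsing_inv _ ((isUnit_iff_isUnit_det D).mp hD), Matrix.map_one _ f.map_zero f.map_one,
    Matrix.one_mul]

end BlockTridiagonal

end Matrix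

open Matrix

theorem blockTridiag_charpoly_eq_det_matrixPoly_general
    (K L : ℕ) (hL : 0 < L)
    (Bm Cm Dm : ℕ → Matrix (Fin K) (Fin K) ℂ)
    (hD : ∀ n, IsUnit (Dm n))
    (A : Matrix (Fin L × Fin K) (Fin L × Fin K) ℂ)
    (hA : ∀ (i j : Fin L) (k l : Fin K),
      A (i, k) (j, l) =
        if (i : ℕ) = (j : ℕ) then Bm (i : ℕ) k l
        else if (j : ℕ) = (i : ℕ) + 1 then Dm (i : ℕ) k l
        else if (i : ℕ) = (j : ℕ) + 1 then Cm (j : ℕ) k l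
        else 0)
    (P : ℕ → Matrix (Fin K) (Fin K) (Polynomial ℂ))
    (hP0 : P 0 = 1)
    (hP1 : P 1 = ((Dm 0)⁻¹).map Polynomial.C *
      ((Polynomial.X : Polynomial ℂ) • (1 : Matrix (Fin K) (Fin K) (Polynomial ℂ)) -
        (Bm 0).map Polynomial.C))
    (hPrec : ∀ n, P (n + 2) = ((Dm (n + 1))⁻¹).map Polynomial.C *
      ((Polynomial.X : Polynomial ℂ) • P (n + 1) -
        (Bm (n + 1)).map Polynomial.C * P (n + 1) -
        (Cm n).map Polynomial.C * P n)) :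
    A.charpoly = Polynomial.C (∏ i ∈ Finset.range L, (Dm i).det) * (P L).det ∧
    ∀ lam : ℂ, A.charpoly.rootMultiplicity lam = (P L).det.rootMultiplicity lam := by
  obtain ⟨n, rfl⟩ : ∃ n, L = n + 1 := ⟨L - 1, by omega⟩
  have hA' : A = blockTridiagonal (n + 1) Bm Dm Cm := by
    ext ⟨i, k⟩ ⟨j, l⟩
    rw [hA]
    simp only [blockTridiagonal, tridiagBlock, comp_apply, of_apply]
    split_ifs <;> rfl
  have h0 := map_mul_eq_of_eq_map_inv_mul C (hD 0) hP1
  have hrec i := map_mul_eq_of_eq_map_inv_mul C (hD (i + 1)) (hPrec i)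
  have hP : IsBlockTridiagonalSolution
      (fun i => (X : ℂ[X]) • (1 : Matrix (Fin K) (Fin K) ℂ[X]) - (Bm i).map C)
      (fun i => -(Dm i).map C) (fun i => -(Cm i).map C) P :=
    isBlockTridiagonalSolution_of_recurrence hP0 (by rw [neg_mul, h0, add_neg_cancel])
      fun i => by rw [neg_mul, neg_mul, hrec i, sub_mul, smul_one_mul]; abel
  have hchar : A.charpoly = C (∏ i ∈ Finset.range (n + 1), (Dm i).det) * (P (n + 1)).det := by
    rw [charpoly, hA', charmatrix_blockTridiagonal, det_blockTridiagonal hP0 hP, map_prod]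
    simp [RingHom.map_det]
  refine ⟨hchar, fun lam => ?_⟩
  have hne := A.charpoly_monic.ne_zero
  rw [hchar] at hne ⊢
  rw [rootMultiplicity_mul hne, rootMultiplicity_C, zero_add]

/-- if the block tridiagonal matrix `A` is diagonalizable, its characteristic
polynomial equals `det (P_L)` up to the nonzero constant `det(D₀ ⋯ D_{L-1})`; in particular
each eigenvalue has the same multiplicity as a root of the two polynomials. -/
theorem blockTridiag_charpoly_eq_det_matrixPoly
    (K L : ℕ) (hK : 0 < K) (hL : 0 < L)
    (Bm Cm Dm : ℕ → Matrix (Fin K) (Fin K) ℂ)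
    (hD : ∀ n, IsUnit (Dm n))
    (A : Matrix (Fin L × Fin K) (Fin L × Fin K) ℂ)
    (hA : ∀ (i j : Fin L) (k l : Fin K),
      A (i, k) (j, l) =
        if (i : ℕ) = (j : ℕ) then Bm (i : ℕ) k l
        else if (j : ℕ) = (i : ℕ) + 1 then Dm (i : ℕ) k l
        else if (i : ℕ) = (j : ℕ) + 1 then Cm (j : ℕ) k l
        else 0)
    (hDiag : ∃ (V : Matrix (Fin L × Fin K) (Fin L × Fin K) ℂ) (d : Fin L × Fin K → ℂ),
      IsUnit V ∧ A = V * Matrix.diagonal d * V⁻¹)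
    (P : ℕ → Matrix (Fin K) (Fin K) (Polynomial ℂ))
    (hP0 : P 0 = 1)
    (hP1 : P 1 = ((Dm 0)⁻¹).map Polynomial.C *
      ((Polynomial.X : Polynomial ℂ) • (1 : Matrix (Fin K) (Fin K) (Polynomial ℂ)) -
        (Bm 0).map Polynomial.C))
    (hPrec : ∀ n, P (n + 2) = ((Dm (n + 1))⁻¹).map Polynomial.C *
      ((Polynomial.X : Polynomial ℂ) • P (n + 1) -
        (Bm (n + 1)).map Polynomial.C * P (n + 1) -
        (Cm n).map Polynomial.C * P n)) :
    A.charpoly = Polynomial.C (∏ i ∈ Finset.range L, (Dm i).det) * (P L).det ∧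
    ∀ lam : ℂ, A.charpoly.rootMultiplicity lam = (P L).det.rootMultiplicity lam :=
  blockTridiag_charpoly_eq_det_matrixPoly_general K L hL Bm Cm Dm hD A hA P hP0 hP1 hPrec
end

section
/- For a block tridiagonal matrix A with invertible superdiagonal blocks, every eigenvalue λ of A satisfies dim ker(A − λI_N) ≤ K, i.e., the geometric multiplicity of any eigenvalue is at most the block size K. -/
/-- the geometric multiplicity of any eigenvalue of a block tridiagonal matrix
with invertible superdiagonal blocks is at most the block size `K`. -/
theorem blockTridiag_geometric_multiplicity_le
    (K L : ℕ) (hK : 0 < K) (hL : 0 < L)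
    (Bm Cm Dm : ℕ → Matrix (Fin K) (Fin K) ℂ)
    (hD : ∀ n, IsUnit (Dm n))
    (A : Matrix (Fin L × Fin K) (Fin L × Fin K) ℂ)
    (hA : ∀ (i j : Fin L) (k l : Fin K),
      A (i, k) (j, l) =
        if (i : ℕ) = (j : ℕ) then Bm (i : ℕ) k l
        else if (j : ℕ) = (i : ℕ) + 1 then Dm (i : ℕ) k l
        else if (i : ℕ) = (j : ℕ) + 1 then Cm (j : ℕ) k l
        else 0) :
    ∀ lam : ℂ, (∃ v : Fin L × Fin K → ℂ, v ≠ 0 ∧ A.mulVec v = lam • v) →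
      Module.finrank ℂ (LinearMap.ker (Matrix.mulVecLin (A - lam • 1))) ≤ K := by
  intro lam _
  set M : Matrix (Fin L × Fin K) (Fin L × Fin K) ℂ := A - lam • 1 with hMdef
  -- key: kernel vectors vanishing on the first block vanish everywhere
  have key : ∀ v : Fin L × Fin K → ℂ, M.mulVec v = 0 →
      (∀ k, v (⟨0, hL⟩, k) = 0) → v = 0 := by
    intro v hv h0
    have main : ∀ m : ℕ, ∀ hm : m < L, ∀ k, v (⟨m, hm⟩, k) = 0 := by
      intro m
      induction m using Nat.strong_induction_on with
      | _ m ih =>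
        match m with
        | 0 => intro hm k; exact h0 k
        | m' + 1 =>
          intro hm
          have hm' : m' < L := Nat.lt_of_succ_lt hm
          set w : Fin K → ℂ := fun l => v (⟨m' + 1, hm⟩, l) with hwdef
          have hsum : ∀ k : Fin K, (Dm m').mulVec w k = 0 := by
            intro k
            have heq : M.mulVec v (⟨m', hm'⟩, k) = 0 := by rw [hv]; rfl
            rw [Matrix.mulVec, dotProduct, Fintype.sum_prod_type] at heq
            have hsingle :
                ∑ j : Fin L, ∑ l : Fin K, M (⟨m', hm'⟩, k) (j, l) * v (j, l)
                  = ∑ l : Fin K, M (⟨m', hm'⟩, k) (⟨m' + 1, hm⟩, l) * v (⟨m' + 1, hm⟩, l) := by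
              apply Finset.sum_eq_single
              · intro j _ hj
                apply Finset.sum_eq_zero
                intro l _
                by_cases hjm : (j : ℕ) < m' + 1
                · have : v (j, l) = 0 := by
                    have := ih (j : ℕ) hjm j.2 l
                    simpa using this
                  rw [this, mul_zero]
                · -- (j : ℕ) > m' + 1
                  have hjgt : m' + 1 < (j : ℕ) := by
                    rcases Nat.lt_or_ge (m' + 1) (j : ℕ) with h | h
                    · exact h
                    · exfalso
                      have : (j : ℕ) = m' + 1 := le_antisymm h (Nat.le_of_not_lt hjm)
                      exact hj (Fin.ext this)
                  have hMentry : M (⟨m', hm'⟩, k) (j, l) = 0 := by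
                    rw [hMdef, Matrix.sub_apply, Matrix.smul_apply, Matrix.one_apply,
                      hA ⟨m', hm'⟩ j k l]
                    have h1 : ¬ (m' : ℕ) = (j : ℕ) := by omega
                    have h2 : ¬ (j : ℕ) = m' + 1 := by omega
                    have h3 : ¬ (m' : ℕ) = (j : ℕ) + 1 := by omega
                    have h4 : ((⟨m', hm'⟩ : Fin L), k) ≠ (j, l) := by
                      intro hc
                      apply h1
                      have := congrArg Prod.fst hc
                      exact congrArg Fin.val this
                    simp [h1, h2, h3, h4]
                  rw [hMentry, zero_mul]
              · intro hmem
                exact absurd (Finset.mem_univ _) hmem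
            rw [hsingle] at heq
            have hDentry : ∀ l : Fin K,
                M (⟨m', hm'⟩, k) (⟨m' + 1, hm⟩, l) = Dm m' k l := by
              intro l
              rw [hMdef, Matrix.sub_apply, Matrix.smul_apply, Matrix.one_apply,
                hA ⟨m', hm'⟩ ⟨m' + 1, hm⟩ k l]
              have h1 : ¬ (m' : ℕ) = m' + 1 := by omega
              have h4 : ((⟨m', hm'⟩ : Fin L), k) ≠ ((⟨m' + 1, hm⟩ : Fin L), l) := by
                intro hc
                apply h1
                have := congrArg Prod.fst hc
                exact congrArg Fin.val this
              simp [h1, h4]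
            rw [Matrix.mulVec, dotProduct]
            rw [← heq]
            apply Finset.sum_congr rfl
            intro l _
            rw [hDentry l]
          have hw0 : w = 0 := by
            have hinj := Matrix.mulVec_injective_iff_isUnit.mpr (hD m')
            apply hinj
            funext k
            simpa using hsum k
          intro k
          have := congrFun hw0 k
          simpa [hwdef] using this
    funext p
    obtain ⟨j, l⟩ := p
    have := main (j : ℕ) j.2 l
    simpa using this
  -- restriction to the first block is an injective linear map into ℂ^K
  let f : LinearMap.ker (Matrix.mulVecLin M) →ₗ[ℂ] (Fin K → ℂ) :=
    (LinearMap.funLeft ℂ ℂ (fun k : Fin K => ((⟨0, hL⟩ : Fin L), k))).comp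
      (LinearMap.ker (Matrix.mulVecLin M)).subtype
  have hfinj : Function.Injective f := by
    rw [← LinearMap.ker_eq_bot]
    rw [LinearMap.ker_eq_bot']
    intro ⟨v, hv⟩ hfv
    have hv' : M.mulVec v = 0 := hv
    have h0 : ∀ k, v (⟨0, hL⟩, k) = 0 := fun k => congrFun hfv k
    have := key v hv' h0
    exact Subtype.ext this
  calc Module.finrank ℂ (LinearMap.ker (Matrix.mulVecLin M))
      ≤ Module.finrank ℂ (Fin K → ℂ) := LinearMap.finrank_le_finrank_of_injective hfinj
    _ = K := by simp
end

section
/- Let A be a diagonalizable N×N block tridiagonal matrix with invertible superdiagonal blocks, distinct eigenvalues λ_0,...,λ_{M-1} with multiplicities a_0,...,a_{M-1}, and let H_m be a K×a_m matrix whose columns form a basis of ker P_L(λ_m). Then the N×N matrix V whose (n,m)-th block (0 ≤ n < L, 0 ≤ m < M) is P_n(λ_m)H_m is invertible and satisfies A·V = V·Λ, where Λ = diag(λ_0 I_{a_0}, ..., λ_{M-1} I_{a_{M-1}}). -/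
open Matrix

lemma btd_rec' (K : ℕ) (Bm Cm Dm : ℕ → Matrix (Fin K) (Fin K) ℂ)
    (hD : ∀ n, IsUnit (Dm n))
    (P : ℕ → ℂ → Matrix (Fin K) (Fin K) ℂ)
    (hP0 : ∀ x, P 0 x = 1)
    (hP1 : ∀ x, P 1 x = (Dm 0)⁻¹ * (x • (1 : Matrix (Fin K) (Fin K) ℂ) - Bm 0))
    (hPrec : ∀ n x, P (n + 2) x =
      (Dm (n + 1))⁻¹ * (x • P (n + 1) x - Bm (n + 1) * P (n + 1) x - Cm n * P n x))
    (x : ℂ) :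
    ∀ n, Dm n * P (n+1) x =
      x • P n x - Bm n * P n x - (match n with | 0 => 0 | n'+1 => Cm n' * P n' x) := by
  have hDD : ∀ n, Dm n * (Dm n)⁻¹ = 1 := fun n =>
    Matrix.mul_nonsing_inv _ ((Matrix.isUnit_iff_isUnit_det _).mp (hD n))
  intro n
  cases n with
  | zero =>
      rw [hP1, ← Matrix.mul_assoc, hDD, Matrix.one_mul, hP0]
      simp
  | succ n' =>
      rw [hPrec, ← Matrix.mul_assoc, hDD, Matrix.one_mul]

lemma btd_col (K L : ℕ) (Bm Cm Dm : ℕ → Matrix (Fin K) (Fin K) ℂ)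
    (hD : ∀ n, IsUnit (Dm n))
    (A : Matrix (Fin L × Fin K) (Fin L × Fin K) ℂ)
    (hA : ∀ (i j : Fin L) (k l : Fin K),
      A (i, k) (j, l) =
        if (i : ℕ) = (j : ℕ) then Bm (i : ℕ) k l
        else if (j : ℕ) = (i : ℕ) + 1 then Dm (i : ℕ) k l
        else if (i : ℕ) = (j : ℕ) + 1 then Cm (j : ℕ) k l
        else 0)
    (P : ℕ → ℂ → Matrix (Fin K) (Fin K) ℂ)
    (hP0 : ∀ x, P 0 x = 1)
    (hP1 : ∀ x, P 1 x = (Dm 0)⁻¹ * (x • (1 : Matrix (Fin K) (Fin K) ℂ) - Bm 0))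
    (hPrec : ∀ n x, P (n + 2) x =
      (Dm (n + 1))⁻¹ * (x • P (n + 1) x - Bm (n + 1) * P (n + 1) x - Cm n * P n x))
    (x : ℂ) (h : Fin K → ℂ) (hker : (P L x).mulVec h = 0) :
    A.mulVec (fun p => ((P (p.1 : ℕ) x).mulVec h) p.2)
      = x • (fun p => ((P (p.1 : ℕ) x).mulVec h) p.2) := by
  set u : ℕ → Fin K → ℂ := fun n => (P n x).mulVec h with hu
  have hrec := btd_rec' K Bm Cm Dm hD P hP0 hP1 hPrec x
  funext p
  obtain ⟨i, k⟩ := p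
  show ∑ q : Fin L × Fin K, A (i, k) q * u (q.1 : ℕ) q.2 = x * u (i : ℕ) k
  rw [Fintype.sum_prod_type]
  have hexp : ∀ (j : Fin L) (l : Fin K),
      A (i, k) (j, l) * u (j : ℕ) l =
        (if j = i then Bm (i : ℕ) k l * u (j : ℕ) l else 0)
        + (if (j : ℕ) = (i : ℕ) + 1 then Dm (i : ℕ) k l * u (j : ℕ) l else 0)
        + (if (i : ℕ) = (j : ℕ) + 1 then Cm (j : ℕ) k l * u (j : ℕ) l else 0) := by
    intro j l
    rw [hA]
    simp only [Fin.ext_iff]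
    split_ifs <;> first | ring1 | (exfalso; omega)
  simp only [hexp, Finset.sum_add_distrib]
  -- S1
  have e1 : (∑ j : Fin L, ∑ l : Fin K,
      if j = i then Bm (i : ℕ) k l * u (j : ℕ) l else 0)
      = ((Bm (i : ℕ) * P (i : ℕ) x).mulVec h) k := by
    have pull : ∀ j : Fin L, (∑ l : Fin K, if j = i then Bm (i : ℕ) k l * u (j : ℕ) l else 0)
        = if j = i then ∑ l : Fin K, Bm (i : ℕ) k l * u (j : ℕ) l else 0 := by
      intro j; split_ifs <;> simp
    rw [Finset.sum_congr rfl fun j _ => pull j, Finset.sum_ite_eq' Finset.univ i]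
    simp only [Finset.mem_univ, if_true]
    rw [← Matrix.mulVec_mulVec]
    rfl
  -- S2
  have e2 : (∑ j : Fin L, ∑ l : Fin K,
      if (j : ℕ) = (i : ℕ) + 1 then Dm (i : ℕ) k l * u (j : ℕ) l else 0)
      = ((Dm (i : ℕ) * P ((i : ℕ) + 1) x).mulVec h) k := by
    by_cases hi : (i : ℕ) + 1 < L
    · have hcond : ∀ j : Fin L, ((j : ℕ) = (i : ℕ) + 1) ↔ j = ⟨(i : ℕ) + 1, hi⟩ := by
        intro j; rw [Fin.ext_iff]
      simp only [hcond]
      have pull : ∀ j : Fin L,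
          (∑ l : Fin K, if j = ⟨(i : ℕ) + 1, hi⟩ then Dm (i : ℕ) k l * u (j : ℕ) l else 0)
          = if j = ⟨(i : ℕ) + 1, hi⟩ then ∑ l : Fin K, Dm (i : ℕ) k l * u (j : ℕ) l else 0 := by
        intro j; split_ifs <;> simp
      rw [Finset.sum_congr rfl fun j _ => pull j, Finset.sum_ite_eq' Finset.univ]
      simp only [Finset.mem_univ, if_true]
      rw [← Matrix.mulVec_mulVec]
      rfl
    · have hiL : (i : ℕ) + 1 = L := by have := i.isLt; omega
      have hz : ((Dm (i : ℕ) * P ((i : ℕ) + 1) x).mulVec h) k = 0 := by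
        rw [← Matrix.mulVec_mulVec, hiL, hker, Matrix.mulVec_zero]
        rfl
      rw [hz]
      apply Finset.sum_eq_zero
      intro j _
      apply Finset.sum_eq_zero
      intro l _
      have hne : ¬ ((j : ℕ) = (i : ℕ) + 1) := by have := j.isLt; omega
      simp [hne]
  -- S3
  have e3 : (∑ j : Fin L, ∑ l : Fin K,
      if (i : ℕ) = (j : ℕ) + 1 then Cm (j : ℕ) k l * u (j : ℕ) l else 0)
      = (match (i : ℕ) with
          | 0 => (0 : Matrix (Fin K) (Fin K) ℂ)
          | n' + 1 => Cm n' * P n' x).mulVec h k := by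
    rcases hiv : (i : ℕ) with _ | i'
    · simp only [Matrix.zero_mulVec, Pi.zero_apply]
      apply Finset.sum_eq_zero; intro j _
      apply Finset.sum_eq_zero; intro l _
      simp
    · have hi' : i' < L := by have := i.isLt; omega
      have hcond : ∀ j : Fin L, (i' + 1 = (j : ℕ) + 1) ↔ j = ⟨i', hi'⟩ := by
        intro j
        constructor
        · intro hh; exact Fin.ext (by show (j : ℕ) = i'; omega)
        · intro hh; subst hh; rfl
      simp only [hcond]
      have pull : ∀ j : Fin L,
          (∑ l : Fin K, if j = ⟨i', hi'⟩ then Cm (j : ℕ) k l * u (j : ℕ) l else 0)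
          = if j = ⟨i', hi'⟩ then ∑ l : Fin K, Cm (j : ℕ) k l * u (j : ℕ) l else 0 := by
        intro j; split_ifs <;> simp
      rw [Finset.sum_congr rfl fun j _ => pull j, Finset.sum_ite_eq' Finset.univ]
      simp only [Finset.mem_univ, if_true]
      rw [← Matrix.mulVec_mulVec]
      rfl
  rw [e1, e2, e3]
  have hmat : Bm (i : ℕ) * P (i : ℕ) x + Dm (i : ℕ) * P ((i : ℕ) + 1) x
      + (match (i : ℕ) with
          | 0 => (0 : Matrix (Fin K) (Fin K) ℂ)
          | n' + 1 => Cm n' * P n' x) = x • P (i : ℕ) x := by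
    rw [hrec (i : ℕ)]
    abel
  have key2 := congrArg (fun Y : Matrix (Fin K) (Fin K) ℂ => (Y.mulVec h) k) hmat
  simp only [Matrix.add_mulVec, Pi.add_apply, Matrix.smul_mulVec, Pi.smul_apply,
    smul_eq_mul] at key2
  exact key2

set_option maxHeartbeats 1000000 in
/-- closed-form eigenvector matrix. For a diagonalizable block tridiagonal
matrix with distinct eigenvalues `lam m` of multiplicities `a m`, the block matrix `V` with
`(n, m)`-th block `P n (lam m) * H m` (columns of `H m` a basis of `ker (P L (lam m))`)
is invertible and satisfies `A * V = V * Λ`. -/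
theorem blockTridiag_eigenvector_matrix
    (K L M : ℕ) (hK : 0 < K) (hL : 0 < L)
    (Bm Cm Dm : ℕ → Matrix (Fin K) (Fin K) ℂ)
    (hD : ∀ n, IsUnit (Dm n))
    (A : Matrix (Fin L × Fin K) (Fin L × Fin K) ℂ)
    (hA : ∀ (i j : Fin L) (k l : Fin K),
      A (i, k) (j, l) =
        if (i : ℕ) = (j : ℕ) then Bm (i : ℕ) k l
        else if (j : ℕ) = (i : ℕ) + 1 then Dm (i : ℕ) k l
        else if (i : ℕ) = (j : ℕ) + 1 then Cm (j : ℕ) k l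
        else 0)
    (hDiag : ∃ (S : Matrix (Fin L × Fin K) (Fin L × Fin K) ℂ) (d : Fin L × Fin K → ℂ),
      IsUnit S ∧ A = S * Matrix.diagonal d * S⁻¹)
    (P : ℕ → ℂ → Matrix (Fin K) (Fin K) ℂ)
    (hP0 : ∀ x, P 0 x = 1)
    (hP1 : ∀ x, P 1 x = (Dm 0)⁻¹ * (x • (1 : Matrix (Fin K) (Fin K) ℂ) - Bm 0))
    (hPrec : ∀ n x, P (n + 2) x =
      (Dm (n + 1))⁻¹ * (x • P (n + 1) x - Bm (n + 1) * P (n + 1) x - Cm n * P n x))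
    (lam : Fin M → ℂ) (hlam : Function.Injective lam)
    (hEig : ∀ m, ∃ v : Fin L × Fin K → ℂ, v ≠ 0 ∧ A.mulVec v = lam m • v)
    (a : Fin M → ℕ)
    (hsum : ∑ m, a m = K * L)
    (H : (m : Fin M) → Matrix (Fin K) (Fin (a m)) ℂ)
    (hHindep : ∀ m, LinearIndependent ℂ (fun j : Fin (a m) => fun k : Fin K => H m k j))
    (hHspan : ∀ m, Submodule.span ℂ (Set.range (fun j : Fin (a m) => fun k : Fin K => H m k j))
      = LinearMap.ker (Matrix.mulVecLin (P L (lam m))))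
    (V : Matrix (Fin L × Fin K) ((m : Fin M) × Fin (a m)) ℂ)
    (hV : ∀ (p : Fin L × Fin K) (s : (m : Fin M) × Fin (a m)),
      V p s = (P (p.1 : ℕ) (lam s.1) * H s.1) p.2 s.2) :
    Function.Bijective (Matrix.mulVecLin V) ∧
    A * V = V * Matrix.diagonal (fun s : (m : Fin M) × Fin (a m) => lam s.1) := by
  classical
  -- columns of V in `mulVec` form
  have hVfun : ∀ s : (m : Fin M) × Fin (a m),
      (fun p : Fin L × Fin K => V p s)
        = fun p => ((P (p.1 : ℕ) (lam s.1)).mulVec (fun k => H s.1 k s.2)) p.2 := by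
    intro s
    funext p
    rw [hV]
    simp [Matrix.mul_apply, Matrix.mulVec, dotProduct]
  have hker : ∀ (m : Fin M) (j : Fin (a m)),
      (P L (lam m)).mulVec (fun k => H m k j) = 0 := by
    intro m j
    have hmem : (fun k => H m k j) ∈ LinearMap.ker (Matrix.mulVecLin (P L (lam m))) := by
      rw [← hHspan m]
      exact Submodule.subset_span ⟨j, rfl⟩
    simpa [Matrix.mulVecLin_apply] using LinearMap.mem_ker.mp hmem
  have hcol : ∀ s : (m : Fin M) × Fin (a m),
      A.mulVec (fun p => V p s) = lam s.1 • (fun p => V p s) := by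
    intro s
    rw [hVfun s]
    exact btd_col K L Bm Cm Dm hD A hA P hP0 hP1 hPrec (lam s.1)
      (fun k => H s.1 k s.2) (hker s.1 s.2)
  -- the intertwining identity
  have hAV : A * V = V * Matrix.diagonal (fun s : (m : Fin M) × Fin (a m) => lam s.1) := by
    ext p s
    have h1 : (A * V) p s = A.mulVec (fun q => V q s) p := by
      simp [Matrix.mul_apply, Matrix.mulVec, dotProduct]
    rw [h1, hcol s]
    simp only [Pi.smul_apply, smul_eq_mul, Matrix.mul_diagonal]
    ring
  -- injectivity
  have hinj : Function.Injective (Matrix.mulVecLin V) := by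
    rw [← LinearMap.ker_eq_bot, LinearMap.ker_eq_bot']
    intro xx hxx
    set w : Fin M → (Fin L × Fin K → ℂ) :=
      fun m => ∑ j : Fin (a m), xx ⟨m, j⟩ • (fun p => V p ⟨m, j⟩) with hw
    have hws : ∑ m, w m = 0 := by
      have hVx : V.mulVec xx = 0 := by simpa [Matrix.mulVecLin_apply] using hxx
      rw [← hVx]
      funext p
      simp only [hw, Finset.sum_apply, Pi.smul_apply, smul_eq_mul]
      rw [show (V.mulVec xx) p = ∑ s : (m : Fin M) × Fin (a m), V p s * xx s from rfl,
        show (Finset.univ : Finset ((m : Fin M) × Fin (a m)))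
          = Finset.univ.sigma (fun _ => Finset.univ) from Finset.univ_sigma_univ.symm,
        Finset.sum_sigma]
      exact Finset.sum_congr rfl fun m _ => Finset.sum_congr rfl fun j _ => (mul_comm _ _)
    have hwm : ∀ m, w m ∈ Module.End.eigenspace (Matrix.mulVecLin A) (lam m) := by
      intro m
      rw [Module.End.mem_eigenspace_iff]
      show Matrix.mulVecLin A (w m) = lam m • w m
      rw [hw]
      simp only [map_sum, LinearMap.map_smul, Matrix.mulVecLin_apply]
      rw [Finset.smul_sum]
      refine Finset.sum_congr rfl fun j _ => ?_
      rw [hcol ⟨m, j⟩, smul_comm]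
    have h1 : ∀ m : {m : Fin M // w m ≠ 0},
        Module.End.HasEigenvector (Matrix.mulVecLin A) (lam m.1) (w m.1) := by
      intro m
      rw [Module.End.hasEigenvector_iff]
      exact ⟨hwm m.1, m.2⟩
    have li : LinearIndependent ℂ (fun m : {m : Fin M // w m ≠ 0} => w m.1) :=
      Module.End.eigenvectors_linearIndependent' (ι := {m : Fin M // w m ≠ 0})
        (Matrix.mulVecLin A) (fun m => lam m.1)
        (fun x y hxy => Subtype.val_injective (hlam hxy)) (fun m => w m.1) h1
    have hsub : ∑ m : {m : Fin M // w m ≠ 0}, w m.1 = 0 := by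
      rw [← (Finset.sum_subtype (Finset.univ.filter fun m => w m ≠ 0) (by simp) w),
        Finset.sum_filter_ne_zero]
      exact hws
    have hwz : ∀ m, w m = 0 := by
      intro m
      by_contra hm
      have hall := Fintype.linearIndependent_iff.mp li (fun _ => (1 : ℂ))
        (by simpa using hsub) ⟨m, hm⟩
      exact one_ne_zero hall
    have hxz : ∀ (m : Fin M) (j : Fin (a m)), xx ⟨m, j⟩ = 0 := by
      intro m
      have heval : ∀ k : Fin K, ∑ j : Fin (a m), xx ⟨m, j⟩ * H m k j = 0 := by
        intro k
        have hev := congrFun (hwz m) (⟨0, hL⟩, k)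
        simp only [hw, Finset.sum_apply, Pi.smul_apply, smul_eq_mul, Pi.zero_apply] at hev
        have hV0 : ∀ j : Fin (a m), V (⟨0, hL⟩, k) ⟨m, j⟩ = H m k j := by
          intro j
          rw [hV]
          show (P ((⟨0, hL⟩ : Fin L) : ℕ) (lam m) * H m) k j = H m k j
          rw [show ((⟨0, hL⟩ : Fin L) : ℕ) = 0 from rfl, hP0, Matrix.one_mul]
        simpa [hV0] using hev
      have := Fintype.linearIndependent_iff.mp (hHindep m) (fun j => xx ⟨m, j⟩) ?_
      · exact this
      · funext k
        simpa using heval k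
    funext s
    obtain ⟨m, j⟩ := s
    exact hxz m j
  -- surjectivity via dimension count
  have hfr : Module.finrank ℂ (((m : Fin M) × Fin (a m)) → ℂ)
      = Module.finrank ℂ ((Fin L × Fin K) → ℂ) := by
    rw [Module.finrank_fintype_fun_eq_card, Module.finrank_fintype_fun_eq_card,
      Fintype.card_sigma, Fintype.card_prod, Fintype.card_fin, Fintype.card_fin]
    simp only [Fintype.card_fin]
    rw [hsum, Nat.mul_comm]
  exact ⟨⟨hinj, (LinearMap.injective_iff_surjective_of_finrank_eq_finrank hfr).mp hinj⟩, hAV⟩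
end

section
/- Let A be a block tridiagonal matrix with invertible superdiagonal blocks and P_n the associated matrix polynomials. Fix λ ∈ ℂ and r ≥ 1, and suppose u ∈ ℂ^K satisfies P_L^{(s)}(λ)u = 0 for all 0 ≤ s ≤ r, where P_L^{(s)} denotes the s-th derivative. Then the vectors v_s = (1/s!)·(P_0^{(s)}(λ)u, ..., P_{L-1}^{(s)}(λ)u)^T for 0 ≤ s ≤ r form a Jordan chain for A at λ, i.e., A·v_0 = λ·v_0 and A·v_s = λ·v_s + v_{s-1} for 1 ≤ s ≤ r. -/
open Polynomial


noncomputable def fS (lam : ℂ) (s : ℕ) : Polynomial ℂ →ₗ[ℂ] ℂ :=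
  (Polynomial.leval lam).comp
    ((Polynomial.derivative : Polynomial ℂ →ₗ[ℂ] Polynomial ℂ) ^ s)

lemma fS_apply (lam : ℂ) (s : ℕ) (q : Polynomial ℂ) :
    fS lam s q = (Polynomial.derivative^[s] q).eval lam := by
  simp [fS, Module.End.pow_apply, Polynomial.leval_apply]

lemma fS_C_mul (lam : ℂ) (s : ℕ) (a : ℂ) (q : Polynomial ℂ) :
    fS lam s (C a * q) = a * fS lam s q := by
  simp [fS_apply, Polynomial.iterate_derivative_C_mul]

lemma iter_comm (s : ℕ) (p : Polynomial ℂ) :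
    Polynomial.derivative (Polynomial.derivative^[s] p) =
      Polynomial.derivative^[s] (Polynomial.derivative p) := by
  rw [← Function.iterate_succ_apply' Polynomial.derivative s p,
    Function.iterate_succ_apply]

lemma iter_deriv_X_mul (q : Polynomial ℂ) (s : ℕ) :
    Polynomial.derivative^[s+1] (X * q) =
      X * Polynomial.derivative^[s+1] q
        + ((s : Polynomial ℂ) + 1) * Polynomial.derivative^[s] q := by
  induction s with
  | zero => simp [Polynomial.derivative_mul]; ring
  | succ s ih =>
      rw [Function.iterate_succ_apply' Polynomial.derivative (s+1), ih]
      rw [Function.iterate_succ_apply' Polynomial.derivative (s+1) q]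
      simp only [Polynomial.derivative_mul, Polynomial.derivative_add,
        Polynomial.derivative_natCast, Polynomial.derivative_one, Polynomial.derivative_X,
        iter_comm, Function.iterate_succ_apply]
      push_cast
      ring

lemma fS_X_mul (lam : ℂ) (s : ℕ) (q : Polynomial ℂ) :
    fS lam s (X * q) = lam * fS lam s q + (s : ℂ) * fS lam (s-1) q := by
  cases s with
  | zero => simp [fS_apply]
  | succ s =>
      simp only [fS_apply, iter_deriv_X_mul, Nat.add_sub_cancel, Polynomial.eval_add,
        Polynomial.eval_mul, Polynomial.eval_X, Polynomial.eval_natCast, Polynomial.eval_one]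
      push_cast
      ring

lemma sum_ite_fin_val {M : Type*} [AddCommMonoid M] {L : ℕ} (c : ℕ) (g : Fin L → M) :
    (∑ j : Fin L, if (j : ℕ) = c then g j else 0) = if h : c < L then g ⟨c, h⟩ else 0 := by
  by_cases h : c < L
  · rw [dif_pos h, Finset.sum_eq_single (⟨c, h⟩ : Fin L)]
    · rw [if_pos rfl]
    · intro b _ hb; rw [if_neg]; intro hc; exact hb (Fin.ext hc)
    · intro hmem; exact absurd (Finset.mem_univ _) hmem
  · rw [dif_neg h]; apply Finset.sum_eq_zero; intro j _; rw [if_neg]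
    intro hc; exact h (hc ▸ j.isLt)

lemma sum_ite_fin_val' {M : Type*} [AddCommMonoid M] {L : ℕ} (c : ℕ) (g : Fin L → M) :
    (∑ j : Fin L, if c = (j : ℕ) + 1 then g j else 0)
      = if h : 0 < c ∧ c - 1 < L then g ⟨c - 1, h.2⟩ else 0 := by
  cases c with
  | zero =>
      rw [dif_neg (by omega)]
      apply Finset.sum_eq_zero; intro j _; rw [if_neg (by omega)]
  | succ c =>
      rw [show (∑ j : Fin L, if c + 1 = (j:ℕ)+1 then g j else 0)
          = ∑ j : Fin L, if (j:ℕ) = c then g j else 0 from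
        Finset.sum_congr rfl (fun j _ => if_congr (by omega) rfl rfl), sum_ite_fin_val]
      simp only [Nat.add_sub_cancel]
      by_cases h : c < L
      · rw [dif_pos h, dif_pos ⟨Nat.succ_pos _, h⟩]
      · rw [dif_neg h, dif_neg (by omega)]

/-- if `u ≠ 0` is annihilated by all derivatives `P_L⁽ˢ⁾(λ)` for `0 ≤ s ≤ r`,
then the vectors `v_s = (1/s!) (P₀⁽ˢ⁾(λ)u, …, P_{L-1}⁽ˢ⁾(λ)u)` form a Jordan chain of `A`
at `λ`. -/
theorem blockTridiag_jordan_chain_derivatives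
    (K L : ℕ) (hK : 0 < K) (hL : 0 < L)
    (Bm Cm Dm : ℕ → Matrix (Fin K) (Fin K) ℂ)
    (hD : ∀ n, IsUnit (Dm n))
    (hDlast : Dm (L - 1) = 1)
    (A : Matrix (Fin L × Fin K) (Fin L × Fin K) ℂ)
    (hA : ∀ (i j : Fin L) (k l : Fin K),
      A (i, k) (j, l) =
        if (i : ℕ) = (j : ℕ) then Bm (i : ℕ) k l
        else if (j : ℕ) = (i : ℕ) + 1 then Dm (i : ℕ) k l
        else if (i : ℕ) = (j : ℕ) + 1 then Cm (j : ℕ) k l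
        else 0)
    (P : ℕ → Matrix (Fin K) (Fin K) (Polynomial ℂ))
    (hP0 : P 0 = 1)
    (hP1 : P 1 = ((Dm 0)⁻¹).map Polynomial.C *
      ((Polynomial.X : Polynomial ℂ) • (1 : Matrix (Fin K) (Fin K) (Polynomial ℂ)) -
        (Bm 0).map Polynomial.C))
    (hPrec : ∀ n, P (n + 2) = ((Dm (n + 1))⁻¹).map Polynomial.C *
      ((Polynomial.X : Polynomial ℂ) • P (n + 1) -
        (Bm (n + 1)).map Polynomial.C * P (n + 1) -
        (Cm n).map Polynomial.C * P n))
    (lam : ℂ) (r : ℕ) (hr : 1 ≤ r)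
    (u : Fin K → ℂ) (hu : u ≠ 0)
    (hker : ∀ s ≤ r,
      ((P L).map (fun q => (Polynomial.derivative^[s] q).eval lam)).mulVec u = 0)
    (v : ℕ → (Fin L × Fin K → ℂ))
    (hv : ∀ (s : ℕ) (p : Fin L × Fin K),
      v s p = (s.factorial : ℂ)⁻¹ *
        ((P (p.1 : ℕ)).map (fun q => (Polynomial.derivative^[s] q).eval lam)).mulVec u p.2) :
    A.mulVec (v 0) = lam • v 0 ∧
    ∀ s : ℕ, 1 ≤ s → s ≤ r → A.mulVec (v s) = lam • v s + v (s - 1) := by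
  classical
  set f : ℕ → Polynomial ℂ → ℂ :=
    fun s q => (Polynomial.derivative^[s] q).eval lam with hfdef
  have hf : ∀ s : ℕ, f s = fun q => fS lam s q :=
    fun s => funext fun q => (fS_apply lam s q).symm
  set w : ℕ → ℕ → (Fin K → ℂ) := fun s n => ((P n).map (f s)).mulVec u with hwdef
  -- the matrix three-term identity
  have hDinv : ∀ n, (Dm n).map C * ((Dm n)⁻¹).map C = 1 := by
    intro n
    rw [← Matrix.map_mul, Matrix.mul_nonsing_inv _ ((Matrix.isUnit_iff_isUnit_det _).mp (hD n))]
    simp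
  have hmat0 : (Dm 0).map C * P 1
      = (X : Polynomial ℂ) • P 0 - (Bm 0).map C * P 0 := by
    rw [hP1, ← Matrix.mul_assoc, hDinv 0, Matrix.one_mul, hP0, Matrix.mul_one]
  have hmatS : ∀ n, (Dm (n+1)).map C * P (n+2)
      = (X : Polynomial ℂ) • P (n+1) - (Bm (n+1)).map C * P (n+1)
        - (Cm n).map C * P n := by
    intro n
    rw [hPrec n, ← Matrix.mul_assoc, hDinv (n+1), Matrix.one_mul]
  -- transfer to vectors
  have hmapmul : ∀ (M : Matrix (Fin K) (Fin K) ℂ) (Q : Matrix (Fin K) (Fin K) (Polynomial ℂ))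
      (s : ℕ), ((M.map C * Q).map (f s)).mulVec u = M.mulVec ((Q.map (f s)).mulVec u) := by
    intro M Q s
    rw [hf s]
    funext k
    simp only [Matrix.mulVec, dotProduct, Matrix.map_apply, Matrix.mul_apply,
      map_sum, fS_C_mul, Finset.sum_mul, Finset.mul_sum]
    rw [Finset.sum_comm]
    exact Finset.sum_congr rfl fun j _ => Finset.sum_congr rfl fun l _ => by ring
  have hmapsub : ∀ (Q R : Matrix (Fin K) (Fin K) (Polynomial ℂ)) (s : ℕ),
      ((Q - R).map (f s)).mulVec u = ((Q.map (f s)).mulVec u) - ((R.map (f s)).mulVec u) := by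
    intro Q R s
    rw [hf s, Matrix.map_sub _ (fun a b => map_sub (fS lam s) a b), Matrix.sub_mulVec]
  have hmapX : ∀ (Q : Matrix (Fin K) (Fin K) (Polynomial ℂ)) (s : ℕ),
      (((X : Polynomial ℂ) • Q).map (f s)).mulVec u
        = lam • ((Q.map (f s)).mulVec u) + (s : ℂ) • ((Q.map (f (s-1))).mulVec u) := by
    intro Q s
    rw [hf s, hf (s-1)]
    funext k
    simp only [Matrix.mulVec, dotProduct, Matrix.map_apply, Matrix.smul_apply,
      smul_eq_mul, fS_X_mul, Pi.add_apply, Pi.smul_apply, Finset.mul_sum, add_mul]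
    rw [Finset.sum_add_distrib]
    congr 1 <;> exact Finset.sum_congr rfl fun l _ => by ring
  have hvecid : ∀ (s n : ℕ), (Dm n).mulVec (w s (n+1))
      = lam • w s n + (s : ℂ) • w (s-1) n - (Bm n).mulVec (w s n)
        - (if n = 0 then 0 else (Cm (n-1)).mulVec (w s (n-1))) := by
    intro s n
    cases n with
    | zero =>
        have h := congrArg (fun Q : Matrix (Fin K) (Fin K) (Polynomial ℂ) =>
          (Q.map (f s)).mulVec u) hmat0
        rw [hmapmul, hmapsub, hmapX, hmapmul] at h
        rw [if_pos rfl, sub_zero]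
        exact h
    | succ n =>
        have h := congrArg (fun Q : Matrix (Fin K) (Fin K) (Polynomial ℂ) =>
          (Q.map (f s)).mulVec u) (hmatS n)
        rw [hmapmul, hmapsub, hmapsub, hmapX, hmapmul, hmapmul] at h
        rw [if_neg (Nat.succ_ne_zero n), Nat.add_sub_cancel]
        exact h
  -- the last block vanishes
  have hwL : ∀ s ≤ r, w s L = 0 := fun s hs => hker s hs
  -- the main row computation
  have hrow : ∀ s, s ≤ r → ∀ (i : Fin L) (k : Fin K),
      A.mulVec (v s) (i, k)
        = (s.factorial : ℂ)⁻¹ * (lam * w s i k + (s : ℂ) * w (s-1) i k) := by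
    intro s hs i k
    have hexp : A.mulVec (v s) (i, k) = ∑ j : Fin L, ∑ l : Fin K, A (i,k) (j,l) * v s (j,l) := by
      simp [Matrix.mulVec, dotProduct, Fintype.sum_prod_type]
    rw [hexp]
    have hterm : ∀ (j : Fin L) (l : Fin K), A (i,k) (j,l) * v s (j,l)
        = (if (j:ℕ) = (i:ℕ) then Bm (i:ℕ) k l * v s (j,l) else 0)
          + (if (j:ℕ) = (i:ℕ)+1 then Dm (i:ℕ) k l * v s (j,l) else 0)
          + (if (i:ℕ) = (j:ℕ)+1 then Cm (j:ℕ) k l * v s (j,l) else 0) := by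
      intro j l
      rw [hA]
      split_ifs <;> (try ring) <;> omega
    have hpull : ∀ (c : Prop) [Decidable c] (t : Fin K → ℂ),
        (∑ l : Fin K, if c then t l else 0) = if c then ∑ l : Fin K, t l else 0 := by
      intro c _ t; split <;> simp
    calc ∑ j : Fin L, ∑ l : Fin K, A (i,k) (j,l) * v s (j,l)
        = (∑ j : Fin L, if (j:ℕ) = (i:ℕ) then ∑ l, Bm (i:ℕ) k l * v s (j,l) else 0)
          + (∑ j : Fin L, if (j:ℕ) = (i:ℕ)+1 then ∑ l, Dm (i:ℕ) k l * v s (j,l) else 0)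
          + (∑ j : Fin L, if (i:ℕ) = (j:ℕ)+1 then ∑ l, Cm (j:ℕ) k l * v s (j,l) else 0) := by
          rw [← Finset.sum_add_distrib, ← Finset.sum_add_distrib]
          exact Finset.sum_congr rfl fun j _ => by
            rw [← hpull, ← hpull, ← hpull, ← Finset.sum_add_distrib, ← Finset.sum_add_distrib]
            exact Finset.sum_congr rfl fun l _ => hterm j l
      _ = (s.factorial : ℂ)⁻¹ * (lam * w s i k + (s : ℂ) * w (s-1) i k) := by
          rw [sum_ite_fin_val, sum_ite_fin_val, sum_ite_fin_val']
          have hvw : ∀ (j : Fin L) (l : Fin K),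
              v s (j, l) = (s.factorial : ℂ)⁻¹ * w s (j:ℕ) l := fun j l => hv s (j, l)
          have hms : ∀ (M : Matrix (Fin K) (Fin K) ℂ) (j : Fin L),
              (∑ l, M k l * v s (j, l)) = (s.factorial : ℂ)⁻¹ * M.mulVec (w s (j:ℕ)) k := by
            intro M j
            simp only [hvw, Matrix.mulVec, dotProduct, Finset.mul_sum]
            exact Finset.sum_congr rfl fun l _ => by ring
          have hms' : ∀ (M : Matrix (Fin K) (Fin K) ℂ) (m : ℕ) (h : m < L),
              (∑ l, M k l * v s ((⟨m, h⟩ : Fin L), l))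
                = (s.factorial : ℂ)⁻¹ * M.mulVec (w s m) k := fun M m h => hms M ⟨m, h⟩
          simp only [Fin.val_mk]
          rw [dif_pos i.isLt, hms' (Bm (i:ℕ)) (i:ℕ) i.isLt]
          by_cases hiL : (i:ℕ)+1 < L
          · rw [dif_pos hiL, hms' (Dm (i:ℕ)) ((i:ℕ)+1) hiL]
            by_cases hi0 : (i:ℕ) = 0
            · rw [dif_neg (by omega)]
              have h0 := hvecid s (i:ℕ)
              rw [if_pos hi0, sub_zero] at h0
              have h := congr_fun h0 k
              simp only [Pi.add_apply, Pi.sub_apply, Pi.smul_apply, smul_eq_mul] at h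
              linear_combination (s.factorial:ℂ)⁻¹ * h
            · rw [dif_pos ⟨Nat.pos_of_ne_zero hi0, by omega⟩,
                hms' (Cm ((i:ℕ)-1)) ((i:ℕ)-1) (by omega)]
              have h0 := hvecid s (i:ℕ)
              rw [if_neg hi0] at h0
              have h := congr_fun h0 k
              simp only [Pi.add_apply, Pi.sub_apply, Pi.smul_apply, smul_eq_mul] at h
              linear_combination (s.factorial:ℂ)⁻¹ * h
          · rw [dif_neg hiL]
            have hiL' : (i:ℕ)+1 = L := by have := i.isLt; omega
            have h0 := hvecid s (i:ℕ)
            rw [hiL', hwL s hs, Matrix.mulVec_zero] at h0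
            by_cases hi0 : (i:ℕ) = 0
            · rw [dif_neg (by omega)]
              rw [if_pos hi0, sub_zero] at h0
              have h := congr_fun h0 k
              simp only [Pi.add_apply, Pi.sub_apply, Pi.smul_apply, Pi.zero_apply,
                smul_eq_mul] at h
              linear_combination (s.factorial:ℂ)⁻¹ * h
            · rw [dif_pos ⟨Nat.pos_of_ne_zero hi0, by omega⟩,
                hms' (Cm ((i:ℕ)-1)) ((i:ℕ)-1) (by omega)]
              rw [if_neg hi0] at h0
              have h := congr_fun h0 k
              simp only [Pi.add_apply, Pi.sub_apply, Pi.smul_apply, Pi.zero_apply,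
                smul_eq_mul] at h
              linear_combination (s.factorial:ℂ)⁻¹ * h
  have hvw : ∀ (s : ℕ) (j : Fin L) (l : Fin K),
      v s (j, l) = (s.factorial : ℂ)⁻¹ * w s (j:ℕ) l := fun s j l => hv s (j, l)
  constructor
  · funext p
    obtain ⟨i, k⟩ := p
    rw [hrow 0 (Nat.zero_le r) i k]
    simp only [Pi.smul_apply, smul_eq_mul, hvw, Nat.factorial_zero, Nat.cast_one, inv_one,
      Nat.cast_zero, zero_mul, add_zero, one_mul]
  · intro s h1 hs
    funext p
    obtain ⟨i, k⟩ := p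
    rw [hrow s hs i k]
    obtain ⟨t, rfl⟩ : ∃ t, s = t + 1 := ⟨s - 1, by omega⟩
    simp only [Pi.add_apply, Pi.smul_apply, smul_eq_mul, Nat.add_sub_cancel, hvw]
    have h1' : (t.factorial : ℂ) ≠ 0 := Nat.cast_ne_zero.mpr t.factorial_ne_zero
    have h2' : ((t:ℂ)+1) ≠ 0 := Nat.cast_add_one_ne_zero t
    rw [Nat.factorial_succ]
    push_cast
    field_simp
end

section
/- Let A be the KL×KL adjacency matrix of the 'spider' graph with K legs of L nodes each, whose block tridiagonal form has diagonal blocks B, 0, ..., 0 and identity off-diagonal blocks, where B is the star pattern matrix (B_{0j} = B_{j0} = 1 for 1 ≤ j < K, else 0). Then det(x·I − A) equals, up to sign, U_L(x/2)^{K-2}·(U_L(x/2) + √(K−1)·U_{L-1}(x/2))·(U_L(x/2) − √(K−1)·U_{L-1}(x/2)), where U_n are Chebyshev polynomials of the second kind. -/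
/-!
Let `P` be a matrix whose columns are eigenvectors of the star `B`, for the eigenvalues `±√(K-1)`
and `0` (the latter with multiplicity `K - 2`). Conjugating `x - A = (x - Path_L) ⊗ 1 - E₀₀ ⊗ B`
by `1 ⊗ P` makes it block diagonal, with blocks `x - Path_L - λ E₀₀` for the eigenvalues `λ`.
Expanding along the first row, `det (x - Path_L - λ E₀₀) = U_L(x/2) - λ U_{L-1}(x/2)`, because the
determinants `det (x - Path_n)` satisfy the recurrence of `U_n(x/2)`.
-/

open Polynomial Matrix
open scoped Kronecker

namespace Matrix

variable {R : Type*} [CommRing R]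

theorem det_kronecker_one_sub_kronecker_of_mul_eq_mul_diagonal {m k : Type*}
    [Fintype m] [DecidableEq m] [Fintype k] [DecidableEq k]
    (T E : Matrix m m R) {B P : Matrix k k R} {d : k → R} (hP : IsUnit P.det)
    (hBP : B * P = P * diagonal d) :
    (T ⊗ₖ 1 - E ⊗ₖ B).det = ∏ i, (T - d i • E).det := by
  have hblock : T ⊗ₖ 1 - E ⊗ₖ diagonal d = blockDiagonal fun i => T - d i • E := by
    ext ⟨a, i⟩ ⟨b, j⟩
    by_cases hij : i = j
    · subst hij
      simp [mul_comm]
    · simp [hij, blockDiagonal_apply_ne]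
  have hconj : (T ⊗ₖ 1 - E ⊗ₖ B) * (1 ⊗ₖ P) = (1 ⊗ₖ P) * (T ⊗ₖ 1 - E ⊗ₖ diagonal d) := by
    simp only [sub_mul, mul_sub, ← mul_kronecker_mul, Matrix.mul_one, Matrix.one_mul, hBP]
  have hQ : IsUnit (1 ⊗ₖ P : Matrix (m × k) (m × k) R).det := by
    rw [det_kronecker, det_one, one_pow, one_mul]
    exact hP.pow _
  have hdet := congrArg det hconj
  rw [det_mul, det_mul, mul_comm, hblock] at hdet
  rw [hQ.mul_left_cancel hdet, det_blockDiagonal]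

theorem det_sub_single_zero_zero {n : ℕ} (N : Matrix (Fin (n + 1)) (Fin (n + 1)) R) (c : R) :
    (N - single 0 0 c).det = N.det - c * (N.submatrix Fin.succ Fin.succ).det := by
  have hrows : ∀ f : Fin n → Fin (n + 1),
      (N - single 0 0 c).submatrix Fin.succ f = N.submatrix Fin.succ f := by
    intro f
    ext i j
    simp [(Fin.succ_ne_zero i).symm]
  rw [det_succ_row_zero, det_succ_row_zero N, Fin.sum_univ_succ, Fin.sum_univ_succ]
  simp [hrows, fun i : Fin n => (Fin.succ_ne_zero i).symm]
  ring

end Matrix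

namespace SimpleGraph

instance (n : ℕ) : DecidableRel (pathGraph n).Adj := fun _ _ => decidable_of_iff' _ pathGraph_adj

variable {R : Type*} [CommRing R]

theorem submatrix_succ_smul_one_sub_adjMatrix_pathGraph (x : R) (n : ℕ) :
    (x • (1 : Matrix _ _ R) - (pathGraph (n + 1)).adjMatrix R).submatrix Fin.succ Fin.succ =
      x • 1 - (pathGraph n).adjMatrix R := by
  ext i j
  simp [adjMatrix_apply, pathGraph_adj, one_apply]

theorem det_smul_one_sub_adjMatrix_pathGraph_add_two (x : R) (n : ℕ) :
    (x • (1 : Matrix _ _ R) - (pathGraph (n + 2)).adjMatrix R).det =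
      x * (x • (1 : Matrix _ _ R) - (pathGraph (n + 1)).adjMatrix R).det -
        (x • (1 : Matrix _ _ R) - (pathGraph n).adjMatrix R).det := by
  set T := x • (1 : Matrix _ _ R) - (pathGraph (n + 2)).adjMatrix R
  have hminor : (T.submatrix Fin.succ (Fin.succAbove 1)).submatrix Fin.succ Fin.succ =
      x • 1 - (pathGraph n).adjMatrix R := by
    have hcols : Fin.succAbove (1 : Fin (n + 2)) ∘ Fin.succ = Fin.succ ∘ Fin.succ :=
      funext (Fin.succ_succAbove_succ 0)
    rw [submatrix_submatrix, hcols, ← submatrix_submatrix,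
      submatrix_succ_smul_one_sub_adjMatrix_pathGraph,
      submatrix_succ_smul_one_sub_adjMatrix_pathGraph]
  -- the first column of the minor of `T 0 1` is `(-1, 0, …, 0)`
  have hC : (T.submatrix Fin.succ (Fin.succAbove 1)).det =
      -(x • (1 : Matrix _ _ R) - (pathGraph n).adjMatrix R).det := by
    rw [det_succ_column_zero, Fin.sum_univ_succ, Fin.succAbove_zero, hminor]
    simp [T, adjMatrix_apply, pathGraph_adj, one_apply, Fin.succAbove]
  rw [det_succ_row_zero, Fin.sum_univ_succ, Fin.sum_univ_succ]
  simp [hC, T, adjMatrix_apply, pathGraph_adj, one_apply,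
    fun i : Fin n => (Fin.succ_ne_zero (Fin.succ i)).symm,
    submatrix_succ_smul_one_sub_adjMatrix_pathGraph]
  ring

theorem det_two_mul_smul_one_sub_adjMatrix_pathGraph (y : R) (n : ℕ) :
    ((2 * y) • (1 : Matrix _ _ R) - (pathGraph n).adjMatrix R).det =
      (Chebyshev.U R n).eval y := by
  induction n using Nat.twoStepInduction with
  | zero => simp
  | one => simp [adjMatrix_apply]
  | more n ih₁ ih₂ =>
    rw [det_smul_one_sub_adjMatrix_pathGraph_add_two, ih₁, ih₂]
    push_cast
    rw [Chebyshev.U_add_two]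
    simp only [eval_sub, eval_mul, eval_ofNat, eval_X]

theorem det_two_mul_smul_one_sub_adjMatrix_pathGraph_sub_single (y c : R) (n : ℕ) :
    ((2 * y) • (1 : Matrix _ _ R) - (pathGraph (n + 1)).adjMatrix R - single 0 0 c).det =
      (Chebyshev.U R (n + 1)).eval y - c * (Chebyshev.U R n).eval y := by
  rw [det_sub_single_zero_zero, submatrix_succ_smul_one_sub_adjMatrix_pathGraph,
    det_two_mul_smul_one_sub_adjMatrix_pathGraph, det_two_mul_smul_one_sub_adjMatrix_pathGraph]
  push_cast
  rfl

end SimpleGraph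

def starMatrix (R : Type*) [Zero R] [One R] (n : ℕ) : Matrix (Fin (n + 1)) (Fin (n + 1)) R :=
  of fun i j => if (i = 0 ∧ j ≠ 0) ∨ (j = 0 ∧ i ≠ 0) then 1 else 0

section Star

variable {R : Type*} [CommRing R] {n : ℕ}

theorem starMatrix_mulVec_cons (a : R) (w : Fin n → R) :
    starMatrix R n *ᵥ Fin.cons a w = Fin.cons (∑ j, w j) fun _ => a := by
  ext i
  cases i using Fin.cases <;>
    simp [starMatrix, mulVec, dotProduct, Fin.sum_univ_succ, Fin.succ_ne_zero]

def starEigenvectors (s : R) : Matrix (Fin (n + 2)) (Fin (n + 2)) R :=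
  of <| Fin.cons (Fin.cons s 1) <| Fin.cons (Fin.cons (-s) 1) fun j =>
    Fin.cons 0 (Pi.single 0 1 - Pi.single j.succ 1)

def starEigenvalues (s : R) : Fin (n + 2) → R :=
  Fin.cons s <| Fin.cons (-s) 0

theorem starMatrix_mulVec_starEigenvectors {s : R} (hs : s * s = n + 1) (l : Fin (n + 2)) :
    starMatrix R (n + 1) *ᵥ starEigenvectors s l = starEigenvalues s l • starEigenvectors s l := by
  cases l using Fin.cases with
  | zero =>
    change starMatrix R (n + 1) *ᵥ Fin.cons s 1 = s • Fin.cons s 1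
    rw [starMatrix_mulVec_cons]
    ext i
    cases i using Fin.cases <;> simp [hs]
  | succ l => cases l using Fin.cases with
    | zero =>
      change starMatrix R (n + 1) *ᵥ Fin.cons (-s) 1 = -s • Fin.cons (-s) 1
      rw [starMatrix_mulVec_cons]
      ext i
      cases i using Fin.cases <;> simp [hs]
    | succ j =>
      change starMatrix R (n + 1) *ᵥ Fin.cons 0 (Pi.single 0 1 - Pi.single j.succ 1) = 0 • _
      rw [starMatrix_mulVec_cons]
      ext i
      cases i using Fin.cases <;> simp [Finset.sum_sub_distrib]

theorem starMatrix_mul_starEigenvectors_transpose {s : R} (hs : s * s = n + 1) :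
    starMatrix R (n + 1) * (starEigenvectors s)ᵀ =
      (starEigenvectors s)ᵀ * diagonal (starEigenvalues s) := by
  ext m l
  rw [mul_diagonal]
  simpa [mul_apply, mulVec, dotProduct, mul_comm] using
    congrFun (starMatrix_mulVec_starEigenvectors hs l) m

theorem det_starEigenvectors_ne_zero {F : Type*} [Field F] [CharZero F] {s : F}
    (hs : s * s = n + 1) : (starEigenvectors (n := n) s).det ≠ 0 := by
  intro hdet
  obtain ⟨c, hc0, hc⟩ := exists_vecMul_eq_zero_iff.mpr hdet
  have h0 := congrFun hc 0
  have h1 := congrFun hc 1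
  have hj := fun j : Fin n => congrFun hc j.succ.succ
  simp [vecMul, dotProduct, Fin.sum_univ_succ, starEigenvectors, Pi.single_apply] at h0 h1 hj
  have hs0 : s ≠ 0 := by
    rintro rfl
    norm_cast at hs
  have hc1 : c 1 = c 0 := by
    have : (c 0 - c 1) * s = 0 := by linear_combination h0
    linear_combination -(mul_eq_zero.mp this).resolve_right hs0
  have hlegs : ∀ j : Fin n, c j.succ.succ = 2 * c 0 := fun j => by linear_combination -hj j + hc1
  have hc00 : c 0 = 0 := by
    simp only [hc1, hlegs, Finset.sum_const, Finset.card_univ, Fintype.card_fin,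
      nsmul_eq_mul] at h1
    have : (2 * ((n : F) + 1)) * c 0 = 0 := by linear_combination h1
    exact (mul_eq_zero.mp this).resolve_left (by norm_cast)
  apply hc0
  ext l
  cases l using Fin.cases with
  | zero => exact hc00
  | succ l => cases l using Fin.cases with
    | zero => simpa [hc00] using hc1
    | succ j => simp [hlegs, hc00]

theorem prod_sub_starEigenvalues_mul (s a b : R) :
    ∏ i, (a - starEigenvalues (n := n) s i * b) = a ^ n * ((a + s * b) * (a - s * b)) := by
  simp only [Fin.prod_univ_succ, starEigenvalues, Fin.cons_zero, Fin.cons_succ, Pi.zero_apply,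
    zero_mul, sub_zero, Finset.prod_const, Finset.card_univ, Fintype.card_fin]
  ring

end Star

theorem smul_one_sub_eq_adjMatrix_pathGraph_kronecker {R : Type*} [CommRing R] {K m : ℕ}
    {B : Matrix (Fin K) (Fin K) R} {A : Matrix (Fin (m + 1) × Fin K) (Fin (m + 1) × Fin K) R}
    (hA : ∀ (i j : Fin (m + 1)) (k l : Fin K),
      A (i, k) (j, l) =
        if (i : ℕ) = (j : ℕ) then (if (i : ℕ) = 0 then B k l else 0)
        else if (j : ℕ) = (i : ℕ) + 1 ∨ (i : ℕ) = (j : ℕ) + 1 then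
          (1 : Matrix (Fin K) (Fin K) R) k l
        else 0) (x : R) :
    x • 1 - A =
      (x • 1 - (SimpleGraph.pathGraph (m + 1)).adjMatrix R) ⊗ₖ 1 - single 0 0 1 ⊗ₖ B := by
  ext ⟨i, k⟩ ⟨j, l⟩
  rw [Matrix.sub_apply, hA]
  by_cases hij : i = j
  · subst hij
    by_cases hi : i = 0 <;> simp [hi, SimpleGraph.adjMatrix_apply, one_apply, eq_comm]
  · have hij' : (i : ℕ) ≠ j := Fin.val_ne_of_ne hij
    have hcorner : ¬(i = 0 ∧ j = 0) := fun h => hij (h.1.trans h.2.symm)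
    simp [hij, hij', hcorner, SimpleGraph.adjMatrix_apply, SimpleGraph.pathGraph_adj, one_apply,
      eq_comm]
    split_ifs <;> simp

/-- the characteristic determinant of the spider graph adjacency matrix
factors, up to sign, as
`U_L(x/2)^(K−2) · (U_L(x/2) + √(K−1)·U_{L−1}(x/2)) · (U_L(x/2) − √(K−1)·U_{L−1}(x/2))`. -/
theorem spider_charpoly_factorization
    (K L : ℕ) (hK : 2 ≤ K) (hL : 0 < L)
    (B : Matrix (Fin K) (Fin K) ℂ)
    (hB : ∀ i j : Fin K,
      B i j = if ((i : ℕ) = 0 ∧ (j : ℕ) ≠ 0) ∨ ((j : ℕ) = 0 ∧ (i : ℕ) ≠ 0) then 1 else 0)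
    (A : Matrix (Fin L × Fin K) (Fin L × Fin K) ℂ)
    (hA : ∀ (i j : Fin L) (k l : Fin K),
      A (i, k) (j, l) =
        if (i : ℕ) = (j : ℕ) then (if (i : ℕ) = 0 then B k l else 0)
        else if (j : ℕ) = (i : ℕ) + 1 ∨ (i : ℕ) = (j : ℕ) + 1 then
          (1 : Matrix (Fin K) (Fin K) ℂ) k l
        else 0) :
    ∃ ε : ℂ, (ε = 1 ∨ ε = -1) ∧ ∀ x : ℂ,
      (x • (1 : Matrix (Fin L × Fin K) (Fin L × Fin K) ℂ) - A).det =
        ε * ((Polynomial.Chebyshev.U ℂ (L : ℤ)).eval (x / 2)) ^ (K - 2) *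
          (((Polynomial.Chebyshev.U ℂ (L : ℤ)).eval (x / 2) +
              (Real.sqrt ((K : ℝ) - 1) : ℂ) *
                (Polynomial.Chebyshev.U ℂ ((L : ℤ) - 1)).eval (x / 2)) *
            ((Polynomial.Chebyshev.U ℂ (L : ℤ)).eval (x / 2) -
              (Real.sqrt ((K : ℝ) - 1) : ℂ) *
                (Polynomial.Chebyshev.U ℂ ((L : ℤ) - 1)).eval (x / 2))) := by
  obtain ⟨n, rfl⟩ : ∃ n, K = n + 2 := ⟨K - 2, by omega⟩
  obtain ⟨m, rfl⟩ : ∃ m, L = m + 1 := ⟨L - 1, by omega⟩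
  set s : ℂ := (Real.sqrt (((n + 2 : ℕ) : ℝ) - 1) : ℂ)
  have hs : s * s = n + 1 := by
    rw [← Complex.ofReal_mul, Real.mul_self_sqrt (by push_cast; linarith)]
    push_cast
    ring
  have hB' : B = starMatrix ℂ (n + 1) := by
    ext i j
    rw [hB]
    simp only [starMatrix, of_apply, ne_eq, Fin.val_eq_zero_iff]
  refine ⟨1, Or.inl rfl, fun x => ?_⟩
  obtain ⟨y, rfl⟩ : ∃ y, x = 2 * y := ⟨x / 2, by ring⟩
  have hP : IsUnit (starEigenvectors (n := n) s)ᵀ.det := by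
    rw [det_transpose]
    exact (det_starEigenvectors_ne_zero hs).isUnit
  rw [smul_one_sub_eq_adjMatrix_pathGraph_kronecker hA, hB',
    det_kronecker_one_sub_kronecker_of_mul_eq_mul_diagonal _ _ hP
      (starMatrix_mul_starEigenvectors_transpose hs)]
  simp only [smul_single, smul_eq_mul, mul_one,
    SimpleGraph.det_two_mul_smul_one_sub_adjMatrix_pathGraph_sub_single,
    prod_sub_starEigenvalues_mul, mul_div_cancel_left₀ y two_ne_zero]
  push_cast
  simp only [add_sub_cancel_right, one_mul]
end
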